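/- arXiv:1602.01511 — 4 statements merged into one kernel-verified Lean document; each statement's English description precedes it below -/
import Mathlib

section
/- Let f be a homogeneous quadratic function on GF(q) with rank r_f and sign ε_f, and let b ∈ GF(q). If b ∉ Im(L_f), then ∑_{x∈GF(q)} ζ_p^{f(x) − Tr(bx)} = 0. If b ∈ Im(L_f) and x_b ∈ GF(q) satisfies L_f(x_b) = −b/2, then ∑_{x∈GF(q)} ζ_p^{f(x) − Tr(bx)} = ε_f · p^m · (p*)^{−r_f/2} · ζ_p^{−f(x_b)}. -/
noncomputable section

open Finset

/-- `ζ_p = e^{2πi/p}`, a primitive `p`-th root of unity. -/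
def zetaP (p : ℕ) : ℂ := Complex.exp (2 * Real.pi * Complex.I / p)

/-- `ζ_p^c` for `c ∈ GF(p)`. -/
def eP (p : ℕ) (c : ZMod p) : ℂ := zetaP p ^ c.val

/-- The quadratic character `η̄` of `GF(p)` (with `η̄ 0 = 0`), valued in `ℂ`. -/
def chiP (p : ℕ) [Fact p.Prime] (c : ZMod p) : ℂ := ((quadraticChar (ZMod p) c : ℤ) : ℂ)

/-- The Gauss sum `√(p*) = ∑_{c ∈ GF(p)} η̄(c) ζ_p^c`, whose square is
`p* = (-1)^((p-1)/2) * p`. -/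
def GP (p : ℕ) [Fact p.Prime] : ℂ := ∑ c : ZMod p, chiP p c * eP p c

theorem stmt0
    (p m : ℕ) [Fact p.Prime] (hp2 : p ≠ 2) [NeZero m]
    (F : Type) [Field F] [Fintype F] [DecidableEq F] [Algebra (ZMod p) F]
    (hcard : Fintype.card F = p ^ m)
    -- `f` is a homogeneous quadratic function with coefficients `a`
    (f : F → ZMod p) (a : ZMod m → F)
    (hf : ∀ x, f x = ∑ i : ZMod m,
      Algebra.trace (ZMod p) F (a i * x ^ (p ^ (i.val) + 1)))
    -- `L` is the associated linear map `L_f`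
    (L : F → F)
    (hL : ∀ x, L x = (2 : F)⁻¹ *
      ∑ i : ZMod m, (a i + a (-i) ^ (p ^ (i.val))) * x ^ (p ^ (i.val)))
    -- `r` is the rank of `f` (so that `#Ker L_f = p^(m-r)`)
    (r : ℕ) (hrm : r ≤ m)
    (hker : {x : F | L x = 0}.ncard = p ^ (m - r))
    -- `ε` is the sign of `f`
    (ε : ℂ) (hε : ε = 1 ∨ ε = -1)
    (hsign : ∑ x : F, eP p (f x) = ε * (p : ℂ) ^ m * GP p ^ (-(r : ℤ)))
    (b : F) :
    (b ∉ Set.range L →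
      ∑ x : F, eP p (f x - Algebra.trace (ZMod p) F (b * x)) = 0) ∧
    (∀ xb : F, L xb = -(b / 2) →
      ∑ x : F, eP p (f x - Algebra.trace (ZMod p) F (b * x))
        = ε * (p : ℂ) ^ m * GP p ^ (-(r : ℤ)) * eP p (-(f xb))) := by
  have hp : p.Prime := Fact.out
  have hpodd : Odd p := hp.odd_of_ne_two hp2
  haveI hchar : CharP F p := charP_of_injective_algebraMap (algebraMap (ZMod p) F).injective p
  haveI : FiniteDimensional (ZMod p) F := Module.Finite.of_finite
  set Tr := Algebra.trace (ZMod p) F with hTr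
  -- basic facts about eP
  have hprim : IsPrimitiveRoot (zetaP p) p := Complex.isPrimitiveRoot_exp p hp.ne_zero
  have hzp : zetaP p ^ p = 1 := hprim.pow_eq_one
  have heP_add : ∀ u v : ZMod p, eP p (u + v) = eP p u * eP p v := by
    intro u v
    rw [eP, eP, eP, ← pow_add]
    conv_rhs => rw [← Nat.mod_add_div (u.val + v.val) p]
    rw [pow_add, pow_mul, hzp, one_pow, mul_one, ZMod.val_add]
  have heP_ne : ∀ c : ZMod p, c ≠ 0 → eP p c ≠ 1 := by
    intro c hc
    refine hprim.pow_ne_one_of_pos_of_lt ?_ (ZMod.val_lt c)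
    exact fun h => hc ((ZMod.val_eq_zero c).mp h)
  -- constants from the prime field
  have two_ne : (2 : ZMod p) ≠ 0 := by
    intro h
    rw [show (2 : ZMod p) = ((2 : ℕ) : ZMod p) by norm_cast] at h
    rw [ZMod.natCast_eq_zero_iff] at h
    exact hp2 ((Nat.prime_dvd_prime_iff_eq hp Nat.prime_two).mp h)
  have two_eq : (2 : F) = algebraMap (ZMod p) F 2 := (map_ofNat _ 2).symm
  have two_ne_F : (2 : F) ≠ 0 := by
    rw [two_eq]
    intro h
    exact two_ne ((algebraMap (ZMod p) F).injective (by rw [h, map_zero]))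
  have tr_const : ∀ (c : ZMod p) (z : F), Tr (algebraMap (ZMod p) F c * z) = c * Tr z := by
    intro c z
    rw [← Algebra.smul_def, map_smul, smul_eq_mul]
  have const_pow : ∀ (c : ZMod p) (k : ℕ),
      (algebraMap (ZMod p) F c) ^ (p ^ k) = algebraMap (ZMod p) F c := by
    intro c k
    rw [← map_pow, ZMod.pow_card_pow]
  have frob_fix : ∀ x : F, x ^ (p ^ m) = x := by
    intro x
    have := FiniteField.pow_card x
    rwa [hcard] at this
  -- trace is Frobenius-invariant
  have tr_frob : ∀ z : F, Tr (z ^ p) = Tr z := by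
    have hbij : Function.Bijective (frobenius F p) :=
      (Finite.injective_iff_bijective).mp (frobenius_inj F p)
    let e : F ≃ₐ[ZMod p] F := AlgEquiv.ofBijective
      { toRingHom := frobenius F p
        commutes' := fun c => by
          rw [RingHom.toMonoidHom_eq_coe]
          show frobenius F p (algebraMap (ZMod p) F c) = algebraMap (ZMod p) F c
          rw [frobenius_def, ← map_pow, ZMod.pow_card] } hbij
    intro z
    have := Algebra.trace_eq_of_algEquiv e z
    rwa [show e z = z ^ p from rfl] at this
  have tr_frob_pow : ∀ (k : ℕ) (z : F), Tr (z ^ p ^ k) = Tr z := by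
    intro k
    induction k with
    | zero => intro z; rw [pow_zero, pow_one]
    | succ n ih =>
      intro z
      rw [pow_succ, pow_mul, tr_frob, ih]
  -- exponent cancellation
  have cancel : ∀ (i : ZMod m) (y : F), (y ^ p ^ i.val) ^ p ^ ((-i).val) = y := by
    intro i y
    rw [← pow_mul, ← pow_add]
    rcases eq_or_ne i 0 with h | h
    · simp [h]
    · haveI : NeZero i := ⟨h⟩
      rw [ZMod.val_neg_of_ne_zero i, Nat.add_sub_cancel' (ZMod.val_lt i).le]
      exact frob_fix y
  -- the key reindexing identity
  have key_swap : ∀ x y : F,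
      ∑ i : ZMod m, Tr (a i * (x * y ^ p ^ i.val))
        = ∑ i : ZMod m, Tr (a (-i) ^ p ^ i.val * (x ^ p ^ i.val * y)) := by
    intro x y
    refine Fintype.sum_equiv (Equiv.neg (ZMod m)) _ _ fun i => ?_
    show Tr (a i * (x * y ^ p ^ i.val)) = Tr (a (- -i) ^ p ^ (-i).val * (x ^ p ^ (-i).val * y))
    rw [neg_neg, ← tr_frob_pow ((-i).val) (a i * (x * y ^ p ^ i.val))]
    congr 1
    rw [mul_pow, mul_pow, cancel i y]
  -- polarization identity
  have polar : ∀ x y : F, f (x + y) = f x + f y + 2 * Tr (L x * y) := by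
    intro x y
    have expand : ∀ i : ZMod m, (x + y) ^ (p ^ i.val + 1)
        = x ^ (p ^ i.val + 1) + y ^ (p ^ i.val + 1)
          + (x ^ p ^ i.val * y + x * y ^ p ^ i.val) := by
      intro i
      rw [pow_succ, add_pow_char_pow, pow_succ, pow_succ]
      ring
    have h1 : f (x + y) = f x + f y
        + (∑ i : ZMod m, Tr (a i * (x ^ p ^ i.val * y))
          + ∑ i : ZMod m, Tr (a i * (x * y ^ p ^ i.val))) := by
      rw [hf, hf, hf]
      rw [← Finset.sum_add_distrib, ← Finset.sum_add_distrib, ← Finset.sum_add_distrib]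
      refine Finset.sum_congr rfl fun i _ => ?_
      rw [expand i, mul_add, mul_add, mul_add, map_add, map_add, map_add]
    have h2 : 2 * Tr (L x * y)
        = ∑ i : ZMod m, Tr (a i * (x ^ p ^ i.val * y))
          + ∑ i : ZMod m, Tr (a i * (x * y ^ p ^ i.val)) := by
      rw [hL, mul_assoc, two_eq, ← map_inv₀, ← Algebra.smul_def, map_smul, smul_eq_mul,
        ← mul_assoc, mul_inv_cancel₀ two_ne, one_mul, Finset.sum_mul, map_sum]
      rw [key_swap]
      rw [← Finset.sum_add_distrib]
      refine Finset.sum_congr rfl fun i _ => ?_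
      rw [← map_add]
      congr 1
      ring
    rw [h1, h2]
  -- symmetry of the associated bilinear form
  have sym : ∀ x y : F, Tr (L x * y) = Tr (L y * x) := by
    intro x y
    have h1 := polar x y
    have h2 := polar y x
    rw [add_comm x y] at h1
    rw [h1, add_comm (f x) (f y)] at h2
    exact mul_left_cancel₀ two_ne (add_left_cancel h2)
  -- Tr (L x * x) = f x
  have self_tr : ∀ x : F, Tr (L x * x) = f x := by
    intro x
    have h1 := polar x x
    have h4 : f (x + x) = 4 * f x := by
      rw [hf, hf, Finset.mul_sum]
      refine Finset.sum_congr rfl fun i _ => ?_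
      have : (x + x) ^ (p ^ i.val + 1) = (4 : F) * x ^ (p ^ i.val + 1) := by
        rw [← two_mul, mul_pow, pow_succ, two_eq, const_pow, ← two_eq]
        norm_num
      rw [this, mul_left_comm, show (4 : F) = algebraMap (ZMod p) F 4 from (map_ofNat _ 4).symm,
        tr_const]
    have h5 : 2 * Tr (L x * x) = 2 * f x := by linear_combination h4 - h1
    exact mul_left_cancel₀ two_ne h5
  -- oddness facts
  have odd_pk : ∀ k : ℕ, Odd (p ^ k) := fun k => hpodd.pow
  have fneg : ∀ x : F, f (-x) = f x := by
    intro x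
    rw [hf, hf]
    refine Finset.sum_congr rfl fun i _ => ?_
    rw [Even.neg_pow ((odd_pk i.val).add_one)]
  -- Part 2
  have part2 : ∀ xb : F, L xb = -(b / 2) →
      ∑ x : F, eP p (f x - Tr (b * x))
        = ε * (p : ℂ) ^ m * GP p ^ (-(r : ℤ)) * eP p (-(f xb)) := by
    intro xb hxb
    have hb2 : b = -(2 * L xb) := by
      rw [hxb]
      field_simp
    have e2 : ∀ y : F, Tr (b * y) = -(2 * Tr (L xb * y)) := by
      intro y
      rw [hb2, show -(2 * L xb) * y = -((2:F) * (L xb * y)) by ring, map_neg, two_eq,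
        tr_const]
    have key : ∀ y : F, f (y - xb) - Tr (b * (y - xb)) = f y + -(f xb) := by
      intro y
      have e1 : f (y - xb) = f y + f xb - 2 * Tr (L xb * y) := by
        rw [sub_eq_add_neg, polar y (-xb), fneg, sym y (-xb), hxb]
        have : L (-xb) = - L xb := by
          rw [hL, hL, ← mul_neg, ← Finset.sum_neg_distrib]
          congr 1
          refine Finset.sum_congr rfl fun i _ => ?_
          rw [Odd.neg_pow (odd_pk i.val), mul_neg]
        rw [show Tr (L (-xb) * y) = - Tr (L xb * y) by rw [this, neg_mul, map_neg], hxb]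
        ring
      rw [e1, mul_sub, map_sub, e2 y, e2 xb, self_tr xb]
      ring
    have reindex : ∑ x : F, eP p (f x - Tr (b * x))
        = ∑ y : F, eP p (f (y - xb) - Tr (b * (y - xb))) :=
      (Fintype.sum_equiv (Equiv.subRight xb)
        (fun y => eP p (f (y - xb) - Tr (b * (y - xb))))
        (fun x => eP p (f x - Tr (b * x))) fun y => rfl).symm
    rw [reindex]
    calc ∑ y : F, eP p (f (y - xb) - Tr (b * (y - xb)))
        = ∑ y : F, eP p (f y) * eP p (-(f xb)) := by
          refine Finset.sum_congr rfl fun y _ => ?_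
          rw [key y, heP_add]
      _ = (∑ y : F, eP p (f y)) * eP p (-(f xb)) := by rw [← Finset.sum_mul]
      _ = ε * (p : ℂ) ^ m * GP p ^ (-(r : ℤ)) * eP p (-(f xb)) := by rw [hsign]
  refine ⟨?_, part2⟩
  -- Part 1
  intro hb
  by_cases hy : ∃ y : F, L y = 0 ∧ Tr (b * y) ≠ 0
  · obtain ⟨y, hy0, hyT⟩ := hy
    have hf0 : f y = 0 := by rw [← self_tr, hy0, zero_mul, map_zero]
    have shift : ∀ x : F, f (x + y) - Tr (b * (x + y))
        = (f x - Tr (b * x)) + -(Tr (b * y)) := by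
      intro x
      have hLxy : Tr (L x * y) = 0 := by rw [sym, hy0, zero_mul, map_zero]
      rw [polar x y, hLxy, hf0, mul_add, map_add]
      ring
    set S := ∑ x : F, eP p (f x - Tr (b * x)) with hS
    have hshift : S = S * eP p (-(Tr (b * y))) := by
      have reindex : S = ∑ x : F, eP p (f (x + y) - Tr (b * (x + y))) :=
        (Fintype.sum_equiv (Equiv.addRight y)
          (fun x => eP p (f (x + y) - Tr (b * (x + y))))
          (fun x => eP p (f x - Tr (b * x))) fun x => rfl).symm
      calc S = ∑ x : F, eP p (f (x + y) - Tr (b * (x + y))) := reindex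
        _ = ∑ x : F, eP p (f x - Tr (b * x)) * eP p (-(Tr (b * y))) := by
            refine Finset.sum_congr rfl fun x _ => ?_
            rw [shift x, heP_add]
        _ = S * eP p (-(Tr (b * y))) := by rw [← Finset.sum_mul, ← hS]
    have hne : eP p (-(Tr (b * y))) ≠ 1 := heP_ne _ (neg_ne_zero.mpr hyT)
    have : S * (eP p (-(Tr (b * y))) - 1) = 0 := by
      rw [mul_sub, mul_one, ← hshift, sub_self]
    rcases mul_eq_zero.mp this with h | h
    · exact h
    · exact absurd (sub_eq_zero.mp h) hne
  · push_neg at hy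
    exfalso
    apply hb
    -- linear algebra: b ∈ range L
    have map_add' : ∀ x y : F, L (x + y) = L x + L y := by
      intro x y
      rw [hL, hL, hL, ← mul_add, ← Finset.sum_add_distrib]
      congr 1
      refine Finset.sum_congr rfl fun i _ => ?_
      rw [add_pow_char_pow, mul_add]
    have map_smul' : ∀ (c : ZMod p) (x : F), L (c • x) = c • L x := by
      intro c x
      simp only [hL, Algebra.smul_def, Finset.mul_sum, mul_pow, const_pow]
      refine Finset.sum_congr rfl fun i _ => ?_
      ring
    let Llin : F →ₗ[ZMod p] F :=
      { toFun := L
        map_add' := map_add'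
        map_smul' := map_smul' }
    have hnd := traceForm_nondegenerate (ZMod p) F
    set Φ : F →ₗ[ZMod p] Module.Dual (ZMod p) F := Algebra.traceForm (ZMod p) F with hΦ
    have hker0 : LinearMap.ker Φ = ⊥ := by
      rw [LinearMap.ker_eq_bot']
      intro x hx
      exact hnd.1 x fun z => by simpa using LinearMap.congr_fun hx z
    have hΦinj : Function.Injective Φ := LinearMap.ker_eq_bot.mp hker0
    set Ψ : F →ₗ[ZMod p] Module.Dual (ZMod p) F := Φ.comp Llin with hΨ
    set V : Submodule (ZMod p) F := LinearMap.ker Llin with hV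
    have hkerΨ : LinearMap.ker Ψ = V := LinearMap.ker_comp_of_ker_eq_bot Llin hker0
    have hle : LinearMap.range Ψ ≤ V.dualAnnihilator := by
      rintro _ ⟨x, rfl⟩
      rw [Submodule.mem_dualAnnihilator]
      intro w hw
      have hw0 : L w = 0 := hw
      show Tr (L x * w) = 0
      rw [sym, hw0, zero_mul, map_zero]
    have hfr1 : Module.finrank (ZMod p) (LinearMap.range Ψ)
        + Module.finrank (ZMod p) V = Module.finrank (ZMod p) F := by
      rw [← hkerΨ]
      exact LinearMap.finrank_range_add_finrank_ker Ψ
    have hfr2 : Module.finrank (ZMod p) V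
        + Module.finrank (ZMod p) V.dualAnnihilator = Module.finrank (ZMod p) F := by
      have h : Module.finrank (ZMod p) (F ⧸ V) = Module.finrank (ZMod p) V.dualAnnihilator :=
        (Subspace.quotEquivAnnihilator V).finrank_eq
      rw [← h, add_comm]
      exact Submodule.finrank_quotient_add_finrank V
    have heq : LinearMap.range Ψ = V.dualAnnihilator :=
      Submodule.eq_of_le_of_finrank_eq hle (by omega)
    have hmem : Φ b ∈ V.dualAnnihilator := by
      rw [Submodule.mem_dualAnnihilator]
      intro w hw
      exact hy w hw
    rw [← heq] at hmem
    obtain ⟨x, hx⟩ := hmem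
    exact ⟨x, hΦinj hx⟩
end
end

section
/- Let g be a homogeneous quadratic function on GF(q) with rank r_g and sign ε_g, and let t ∈ GF(p)*. Then N(g = t) := #{x ∈ GF(q) : g(x) = t} equals p^{m−1} − ε_g p^{m−1} (p*)^{−r_g/2} if r_g is even, and equals p^{m−1} + ε_g η̄(−t) p^{m−1} (p*)^{−(r_g−1)/2} if r_g is odd. -/
noncomputable section

open Finset

section Aux

variable (p : ℕ) [Fact p.Prime]

lemma zetaP_primroot : IsPrimitiveRoot (zetaP p) p := by
  have := Complex.isPrimitiveRoot_exp p (Nat.Prime.ne_zero Fact.out)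
  simpa [zetaP] using this

lemma zetaP_pow_p : zetaP p ^ p = 1 := (zetaP_primroot p).pow_eq_one

/-- the standard additive character -/
def psiP : AddChar (ZMod p) ℂ where
  toFun := eP p
  map_zero_eq_one' := by simp [eP, ZMod.val_zero]
  map_add_eq_mul' := by
    intro a b
    have hv : (a + b).val = (a.val + b.val) % p := ZMod.val_add a b
    simp only [eP, hv]
    conv_rhs => rw [← pow_add]
    conv_rhs => rw [show a.val + b.val = (a.val + b.val) % p + p * ((a.val + b.val) / p)
      from (Nat.mod_add_div _ _).symm]
    rw [pow_add, pow_mul, zetaP_pow_p, one_pow, mul_one]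

lemma psiP_apply (c : ZMod p) : psiP p c = eP p c := rfl

lemma psiP_ne_one : psiP p ≠ 1 := by
  have hp1 : 1 < p := (Fact.out : p.Prime).one_lt
  intro h
  have h1 : psiP p 1 = 1 := by rw [h]; rfl
  rw [psiP_apply, eP, ZMod.val_one_eq_one_mod, Nat.mod_eq_of_lt hp1, pow_one] at h1
  exact (zetaP_primroot p).ne_one hp1 h1

lemma psiP_primitive : (psiP p).IsPrimitive :=
  AddChar.IsPrimitive.of_ne_one (psiP_ne_one p)

/-- the quadratic character valued in ℂ -/
def chiC : MulChar (ZMod p) ℂ :=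
  (quadraticChar (ZMod p)).ringHomComp (Int.castRingHom ℂ)

lemma chiC_apply (c : ZMod p) : chiC p c = chiP p c := rfl

lemma GP_eq_gaussSum : GP p = gaussSum (chiC p) (psiP p) := by
  simp only [GP, gaussSum, chiC_apply, psiP_apply]

variable (hp2 : p ≠ 2)
include hp2

lemma chiC_ne_one : chiC p ≠ 1 := by
  refine (MulChar.ringHomComp_ne_one_iff (Int.cast_injective (α := ℂ))).mpr ?_
  exact quadraticChar_ne_one (by rwa [ZMod.ringChar_zmod_n])

lemma chiC_quadratic : (chiC p).IsQuadratic :=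
  (quadraticChar_isQuadratic (ZMod p)).comp _

lemma GP_sq : GP p ^ 2 = chiC p (-1) * p := by
  rw [GP_eq_gaussSum, gaussSum_sq (chiC_ne_one p hp2) (chiC_quadratic p hp2) (psiP_primitive p),
    ZMod.card]

lemma GP_ne_zero : GP p ≠ 0 := by
  rw [GP_eq_gaussSum]
  refine gaussSum_ne_zero_of_nontrivial ?_ (chiC_ne_one p hp2) (psiP_primitive p)
  rw [ZMod.card]
  exact_mod_cast (Nat.Prime.ne_zero Fact.out)

end Aux
section B
variable {p : ℕ} [Fact p.Prime]
variable (ψ : AddChar (ZMod p) ℂ) (χ : MulChar (ZMod p) ℂ)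

lemma chi_sq_one (hχ : χ.IsQuadratic) {b : ZMod p} (hb : b ≠ 0) : χ b * χ b = 1 := by
  have h0 : χ b ≠ 0 := by
    intro h
    have : χ b * χ b⁻¹ = 1 := by
      rw [← map_mul, mul_inv_cancel₀ hb, map_one]
    rw [h, zero_mul] at this
    exact zero_ne_one this
  rcases hχ b with h | h | h
  · exact absurd h h0
  · rw [h]; ring
  · rw [h]; ring

lemma sq_sum_eq (hψ : ψ.IsPrimitive) (hχ : χ.IsQuadratic)
    (hq : ∀ u, ((univ.filter (fun x : ZMod p => x ^ 2 = u)).card : ℂ) = 1 + χ u)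
    {b : ZMod p} (hb : b ≠ 0) :
    ∑ x : ZMod p, ψ (b * x ^ 2) = χ b * gaussSum χ ψ := by
  have h1 : ∑ x : ZMod p, ψ (b * x ^ 2)
      = ∑ u : ZMod p, ∑ x ∈ univ.filter (fun x : ZMod p => x ^ 2 = u), ψ (b * x ^ 2) :=
    (Finset.sum_fiberwise_of_maps_to (fun x _ => mem_univ _) _).symm
  have h2 : ∀ u : ZMod p, ∑ x ∈ univ.filter (fun x : ZMod p => x ^ 2 = u), ψ (b * x ^ 2)
      = (1 + χ u) * ψ (b * u) := by
    intro u
    rw [Finset.sum_congr rfl (fun x hx => by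
      rw [(Finset.mem_filter.mp hx).2]), Finset.sum_const, nsmul_eq_mul, hq u]
  rw [h1]
  simp_rw [h2, add_mul, one_mul, Finset.sum_add_distrib]
  have h3 : ∑ u : ZMod p, ψ (b * u) = 0 := by
    have := AddChar.sum_mulShift b hψ
    rw [if_neg hb] at this
    simp_rw [mul_comm b _]
    simpa using this
  have h4 : ∑ u : ZMod p, χ u * ψ (b * u) = gaussSum χ (ψ.mulShift b) := rfl
  rw [h3, h4, zero_add]
  have h5 := gaussSum_mulShift χ ψ (Units.mk0 b hb)
  simp only [Units.val_mk0] at h5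
  calc gaussSum χ (ψ.mulShift b) = (χ b * χ b) * gaussSum χ (ψ.mulShift b) := by
        rw [chi_sq_one χ hχ hb, one_mul]
    _ = χ b * gaussSum χ ψ := by rw [mul_assoc, h5]

lemma card_sqrts_eq (hp2 : p ≠ 2) (u : ZMod p) :
    ((univ.filter (fun x : ZMod p => x ^ 2 = u)).card : ℂ)
      = 1 + ((quadraticChar (ZMod p) u : ℤ) : ℂ) := by
  have h := quadraticChar_card_sqrts (by rwa [ZMod.ringChar_zmod_n] : ringChar (ZMod p) ≠ 2) u
  have h2 : {x : ZMod p | x ^ 2 = u}.toFinset = univ.filter (fun x : ZMod p => x ^ 2 = u) := by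
    ext x; simp
  rw [h2] at h
  calc ((univ.filter (fun x : ZMod p => x ^ 2 = u)).card : ℂ)
      = (((univ.filter (fun x : ZMod p => x ^ 2 = u)).card : ℤ) : ℂ) := by push_cast; ring
    _ = ((quadraticChar (ZMod p) u + 1 : ℤ) : ℂ) := by rw [h]
    _ = 1 + ((quadraticChar (ZMod p) u : ℤ) : ℂ) := by push_cast; ring
end B

section C
variable (p m : ℕ) [Fact p.Prime] [NeZero m]
    (F : Type) [Field F] [Fintype F] [DecidableEq F] [Algebra (ZMod p) F]
    (f : F → ZMod p) (a : ZMod m → F)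
    (hf : ∀ x, f x = ∑ i : ZMod m,
      Algebra.trace (ZMod p) F (a i * x ^ (p ^ (i.val) + 1)))

lemma algmap_pow_frob (c : ZMod p) (k : ℕ) :
    (algebraMap (ZMod p) F c) ^ p ^ k = algebraMap (ZMod p) F c := by
  rw [← map_pow, ZMod.pow_card_pow]

include hf

lemma f_polar (x y : F) :
    f (x + y) - f x - f y
      = ∑ i : ZMod m, Algebra.trace (ZMod p) F
          (a i * (x ^ (p ^ i.val) * y + x * y ^ (p ^ i.val))) := by
  haveI : CharP F p := charP_of_injective_algebraMap (algebraMap (ZMod p) F).injective p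
  rw [hf, hf, hf, ← Finset.sum_sub_distrib, ← Finset.sum_sub_distrib]
  refine Finset.sum_congr rfl fun i _ => ?_
  rw [← map_sub, ← map_sub]
  congr 1
  have hfrob : (x + y) ^ p ^ i.val = x ^ p ^ i.val + y ^ p ^ i.val :=
    add_pow_char_pow x y p i.val
  rw [pow_succ (x + y), pow_succ x, pow_succ y, hfrob]
  ring

/-- `f` as a quadratic form over `ZMod p`. -/
def Qf : QuadraticForm (ZMod p) F :=
  QuadraticMap.ofPolar f
    (fun c x => by
      haveI : CharP F p := charP_of_injective_algebraMap (algebraMap (ZMod p) F).injective p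
      rw [hf, hf, Finset.smul_sum]
      refine Finset.sum_congr rfl fun i _ => ?_
      rw [Algebra.smul_def c x, mul_pow, ← map_smul]
      congr 1
      rw [pow_succ ((algebraMap (ZMod p) F) c), algmap_pow_frob p F c,
        Algebra.smul_def, map_mul]
      ring)
    (fun x x' y => by
      haveI : CharP F p := charP_of_injective_algebraMap (algebraMap (ZMod p) F).injective p
      simp only [QuadraticMap.polar, f_polar p m F f a hf]
      rw [← Finset.sum_add_distrib]
      refine Finset.sum_congr rfl fun i _ => ?_
      rw [← map_add]
      congr 1
      rw [add_pow_char_pow x x' p i.val]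
      ring)
    (fun c x y => by
      haveI : CharP F p := charP_of_injective_algebraMap (algebraMap (ZMod p) F).injective p
      simp only [QuadraticMap.polar, f_polar p m F f a hf]
      rw [Finset.smul_sum]
      refine Finset.sum_congr rfl fun i _ => ?_
      rw [← map_smul]
      congr 1
      rw [Algebra.smul_def c x, mul_pow, algmap_pow_frob p F c, Algebra.smul_def c _]
      ring)

lemma Qf_apply (x : F) : Qf p m F f a hf x = f x := rfl

end C

section D
variable {A M : Type*} [AddCommMonoid A] [CommMonoid M]

lemma addChar_map_sum (ψ : AddChar A M) {ι : Type*} (s : Finset ι) (g : ι → A) :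
    ψ (∑ i ∈ s, g i) = ∏ i ∈ s, ψ (g i) := by
  classical
  induction s using Finset.cons_induction with
  | empty => simp
  | cons i s hi ih => rw [Finset.sum_cons, Finset.prod_cons, AddChar.map_add_eq_mul, ih]

end D

section E
variable {p : ℕ} [Fact p.Prime] (ψ : AddChar (ZMod p) ℂ)

set_option maxHeartbeats 1000000 in
lemma char_sum_wss (n : ℕ) (w : Fin n → ZMod p) (c : ZMod p) :
    ∑ v : Fin n → ZMod p, ψ (c * QuadraticMap.weightedSumSquares (ZMod p) w v)
      = ∏ i, ∑ x : ZMod p, ψ ((c * w i) * x ^ 2) := by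
  have h1 : ∀ v : Fin n → ZMod p,
      ψ (c * QuadraticMap.weightedSumSquares (ZMod p) w v)
        = ∏ i, ψ ((c * w i) * (v i) ^ 2) := by
    intro v
    rw [QuadraticMap.weightedSumSquares_apply, Finset.mul_sum, addChar_map_sum]
    exact Finset.prod_congr rfl fun i _ => by
      rw [show c * (w i • (v i * v i)) = (c * w i) * (v i) ^ 2 from
        by rw [smul_eq_mul]; ring]
  calc ∑ v : Fin n → ZMod p, ψ (c * QuadraticMap.weightedSumSquares (ZMod p) w v)
      = ∑ v : Fin n → ZMod p, ∏ i, ψ ((c * w i) * (v i) ^ 2) :=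
        Finset.sum_congr rfl fun v _ => h1 v
    _ = ∑ v ∈ Fintype.piFinset (fun _ : Fin n => (univ : Finset (ZMod p))),
          ∏ i, ψ ((c * w i) * (v i) ^ 2) := by rw [Fintype.piFinset_univ]
    _ = ∏ i, ∑ x : ZMod p, ψ ((c * w i) * x ^ 2) := by rw [Finset.prod_univ_sum]
end E

section Main
variable {p : ℕ} [Fact p.Prime]

-- factor evaluation
lemma factor_eval (hp2 : p ≠ 2) (ψ : AddChar (ZMod p) ℂ) (hψ : ψ.IsPrimitive)
    (χ : MulChar (ZMod p) ℂ) (hχ : χ.IsQuadratic)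
    (hχq : ∀ u, χ u = ((quadraticChar (ZMod p) u : ℤ) : ℂ)) (d : ZMod p) :
    ∑ x : ZMod p, ψ (d * x ^ 2)
      = if d = 0 then (p : ℂ) else χ d * gaussSum χ ψ := by
  split_ifs with h
  · simp [h, ZMod.card]
  · exact sq_sum_eq ψ χ hψ hχ
      (fun u => by rw [card_sqrts_eq hp2 u, hχq u]) h
end Main

set_option maxHeartbeats 1000000 in
theorem stmt2
    (p m : ℕ) [Fact p.Prime] (hp2 : p ≠ 2) [NeZero m]
    (F : Type) [Field F] [Fintype F] [DecidableEq F] [Algebra (ZMod p) F]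
    (hcard : Fintype.card F = p ^ m)
    -- `f` is a homogeneous quadratic function with coefficients `a`
    (f : F → ZMod p) (a : ZMod m → F)
    (hf : ∀ x, f x = ∑ i : ZMod m,
      Algebra.trace (ZMod p) F (a i * x ^ (p ^ (i.val) + 1)))
    -- `L` is the associated linear map `L_f`
    (L : F → F)
    (hL : ∀ x, L x = (2 : F)⁻¹ *
      ∑ i : ZMod m, (a i + a (-i) ^ (p ^ (i.val))) * x ^ (p ^ (i.val)))
    -- `r` is the rank of `f` (so that `#Ker L_f = p^(m-r)`)
    (r : ℕ) (hrm : r ≤ m)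
    (hker : {x : F | L x = 0}.ncard = p ^ (m - r))
    -- `ε` is the sign of `f`
    (ε : ℂ) (hε : ε = 1 ∨ ε = -1)
    (hsign : ∑ x : F, eP p (f x) = ε * (p : ℂ) ^ m * GP p ^ (-(r : ℤ)))
    (t : ZMod p) (ht : t ≠ 0) :
    (Even r →
      ({x : F | f x = t}.ncard : ℂ)
        = (p : ℂ) ^ (m - 1) - ε * (p : ℂ) ^ (m - 1) * GP p ^ (-(r : ℤ))) ∧
    (Odd r →
      ({x : F | f x = t}.ncard : ℂ)
        = (p : ℂ) ^ (m - 1)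
          + ε * chiP p (-t) * (p : ℂ) ^ (m - 1) * GP p ^ (-((r : ℤ) - 1))) := by
  have hpp : (Fact.out : p.Prime) = Fact.out := rfl
  have hp1 : 1 < p := (Fact.out : p.Prime).one_lt
  have hpC : (p : ℂ) ≠ 0 := by exact_mod_cast (Fact.out : p.Prime).ne_zero
  have hGP : GP p ≠ 0 := GP_ne_zero p hp2
  set ψ := psiP p with hψdef
  set χ := chiC p with hχdef
  have hψ : ψ.IsPrimitive := psiP_primitive p
  have hχ : χ.IsQuadratic := chiC_quadratic p hp2
  have hgs : gaussSum χ ψ = GP p := (GP_eq_gaussSum p).symm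
  -- finite dimensionality
  haveI : Module.Finite (ZMod p) F := Module.Finite.of_finite
  have hn : Module.finrank (ZMod p) F = m := by
    have hcard2 := Module.card_eq_pow_finrank (K := ZMod p) (V := F)
    rw [ZMod.card, hcard] at hcard2
    exact (Nat.pow_right_injective (Fact.out : p.Prime).two_le hcard2.symm)
  haveI : Invertible (2 : ZMod p) := by
    refine invertibleOfNonzero ?_
    intro h
    have : (p : ℕ) ∣ 2 := by
      rwa [← Nat.cast_ofNat (n := 2), ZMod.natCast_eq_zero_iff] at h
    exact hp2 (((Nat.prime_dvd_prime_iff_eq Fact.out Nat.prime_two).mp this))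
  obtain ⟨w, ⟨iso⟩⟩ := (Qf p m F f a hf).equivalent_weightedSumSquares
  -- transport of sums
  have htrans : ∀ c : ZMod p, ∑ x : F, ψ (c * f x)
      = ∑ v : Fin (Module.finrank (ZMod p) F) → ZMod p,
          ψ (c * QuadraticMap.weightedSumSquares (ZMod p) w v) := by
    intro c
    refine (Fintype.sum_bijective (fun x : F => iso x) (EquivLike.bijective iso)
      _ _ (fun x => ?_))
    rw [iso.map_app x]
    rfl
  set k := (univ.filter (fun i : Fin (Module.finrank (ZMod p) F) => ¬ w i = 0)).card with hkdef
  set u := ∏ i ∈ univ.filter (fun i : Fin (Module.finrank (ZMod p) F) => ¬ w i = 0), χ (w i)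
    with hudef
  have hkn : k ≤ Module.finrank (ZMod p) F := by
    rw [hkdef]
    calc (univ.filter (fun i : Fin (Module.finrank (ZMod p) F) => ¬ w i = 0)).card
        ≤ (univ : Finset (Fin (Module.finrank (ZMod p) F))).card := Finset.card_filter_le _ _
      _ = Module.finrank (ZMod p) F := by simp
  have hcard0 : (univ.filter (fun i : Fin (Module.finrank (ZMod p) F) => w i = 0)).card
      = Module.finrank (ZMod p) F - k := by
    have := Finset.card_filter_add_card_filter_not
      (s := (univ : Finset (Fin (Module.finrank (ZMod p) F)))) (p := fun i => w i = 0)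
    rw [Finset.card_univ, Fintype.card_fin] at this
    omega
  have hSc : ∀ c : ZMod p, c ≠ 0 → ∑ x : F, ψ (c * f x)
      = χ c ^ k * ((p:ℂ) ^ (Module.finrank (ZMod p) F - k) * GP p ^ k * u) := by
    intro c hc
    rw [htrans c, char_sum_wss ψ _ w c]
    have hfac : ∀ i : Fin (Module.finrank (ZMod p) F), ∑ x : ZMod p, ψ ((c * w i) * x ^ 2)
        = if w i = 0 then (p:ℂ) else χ c * χ (w i) * GP p := by
      intro i
      rw [factor_eval hp2 ψ hψ χ hχ (fun u => rfl) (c * w i)]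
      by_cases h1 : w i = 0
      · rw [if_pos (by rw [h1, mul_zero]), if_pos h1]
      · rw [if_neg (mul_ne_zero hc h1), if_neg h1, map_mul, hgs]
    rw [Finset.prod_congr rfl (fun i _ => hfac i), Finset.prod_ite _ _,
      Finset.prod_const, hcard0]
    rw [Finset.prod_mul_distrib, Finset.prod_mul_distrib, Finset.prod_const,
      Finset.prod_const, ← hkdef, ← hudef]
    ring
  have hS1 : (p:ℂ) ^ (Module.finrank (ZMod p) F - k) * GP p ^ k * u = ε * (p:ℂ) ^ m * GP p ^ (-(r:ℤ)) := by
    have h1 : ∑ x : F, ψ ((1 : ZMod p) * f x) = ∑ x : F, eP p (f x) :=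
      Finset.sum_congr rfl fun x _ => by rw [one_mul]; rfl
    have h2 := hSc 1 one_ne_zero
    rw [h1, hsign, map_one, one_pow, one_mul] at h2
    exact h2.symm
  have hu2 : u * u = 1 := by
    rw [hudef, ← Finset.prod_mul_distrib]
    exact Finset.prod_eq_one fun i hi => chi_sq_one χ hχ (Finset.mem_filter.mp hi).2
  have hkr : k = r := by
    have hGr : GP p ^ (-(r:ℤ)) * GP p ^ (r:ℤ) = 1 := by
      rw [← zpow_add₀ hGP]; simp
    have h3 : (p:ℂ) ^ (Module.finrank (ZMod p) F - k) * GP p ^ (k + r) * u = ε * (p:ℂ) ^ m := by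
      calc (p:ℂ) ^ (Module.finrank (ZMod p) F - k) * GP p ^ (k + r) * u
          = ((p:ℂ) ^ (Module.finrank (ZMod p) F - k) * GP p ^ k * u) * GP p ^ (r:ℤ) := by
            rw [pow_add, ← zpow_natCast (GP p) r]; ring
        _ = ε * (p:ℂ) ^ m * (GP p ^ (-(r:ℤ)) * GP p ^ (r:ℤ)) := by rw [hS1]; ring
        _ = ε * (p:ℂ) ^ m := by rw [hGr, mul_one]
    have h4 : (p:ℂ) ^ (2*(Module.finrank (ZMod p) F - k)) * (GP p ^ 2) ^ (k + r) * (u * u)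
        = (ε * ε) * (p:ℂ) ^ (2*m) := by
      calc (p:ℂ) ^ (2*(Module.finrank (ZMod p) F - k)) * (GP p ^ 2) ^ (k + r) * (u * u)
          = ((p:ℂ) ^ (Module.finrank (ZMod p) F - k) * GP p ^ (k + r) * u)
            * ((p:ℂ) ^ (Module.finrank (ZMod p) F - k) * GP p ^ (k + r) * u) := by
            ring
        _ = (ε * (p:ℂ) ^ m) * (ε * (p:ℂ) ^ m) := by rw [h3]
        _ = (ε * ε) * (p:ℂ) ^ (2*m) := by rw [two_mul, pow_add]; ring
    have hε2 : ε * ε = 1 := by rcases hε with h | h <;> rw [h] <;> ring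
    have hσ : χ (-1) = 1 ∨ χ (-1) = -1 := by
      rcases hχ (-1) with h | h | h
      · exfalso
        have := chi_sq_one χ hχ (show (-1 : ZMod p) ≠ 0 from neg_ne_zero.mpr one_ne_zero)
        rw [h, zero_mul] at this
        exact zero_ne_one this
      · exact Or.inl h
      · exact Or.inr h
    rw [GP_sq p hp2, hu2, hε2, mul_one, one_mul, ← hχdef] at h4
    rw [mul_pow] at h4
    have h5 : χ (-1) ^ (k + r) * (p:ℂ) ^ (2*(Module.finrank (ZMod p) F - k) + (k+r)) = (p:ℂ) ^ (2*m) := by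
      rw [pow_add (p:ℂ)]; rw [← h4]; ring
    have h6 : (p:ℂ) ^ (2*(Module.finrank (ZMod p) F - k) + (k+r)) = (p:ℂ) ^ (2*m) := by
      rcases hσ with h | h
      · rwa [h, one_pow, one_mul] at h5
      · rcases Nat.even_or_odd (k + r) with he | ho
        · rwa [h, he.neg_one_pow, one_mul] at h5
        · rw [h, ho.neg_one_pow, neg_one_mul] at h5
          exfalso
          have : ((p ^ (2*(Module.finrank (ZMod p) F - k) + (k+r)) + p ^ (2*m) : ℕ) : ℂ) = 0 := by
            push_cast
            rw [← h5]; ring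
          have := Nat.cast_eq_zero.mp this
          have hpos : 0 < p ^ (2*(Module.finrank (ZMod p) F - k) + (k+r)) := Nat.pow_pos (Fact.out : p.Prime).pos
          omega
    have h7 : 2*(Module.finrank (ZMod p) F - k) + (k+r) = 2*m := by
      have : ((p ^ (2*(Module.finrank (ZMod p) F - k) + (k+r)) : ℕ) : ℂ)
          = ((p ^ (2*m) : ℕ) : ℂ) := by push_cast; exact h6
      exact Nat.pow_right_injective (Fact.out : p.Prime).two_le (Nat.cast_injective this)
    omega
  -- the normalized exponential sums
  have hE : ∀ c : ZMod p, c ≠ 0 → ∑ x : F, ψ (c * f x)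
      = χ c ^ r * (ε * (p:ℂ) ^ m * GP p ^ (-(r:ℤ))) := by
    intro c hc
    rw [hSc c hc, hS1, hkr]
  -- the counting identity
  have hN : ({x : F | f x = t}.ncard : ℂ) = ((univ.filter (fun x : F => f x = t)).card : ℂ) := by
    congr 1
    rw [Set.ncard_eq_toFinset_card']
    congr 1
    ext x
    simp
  have hNc : ({x : F | f x = t}.ncard : ℂ) * p
      = ∑ c : ZMod p, ψ (c * (-t)) * ∑ x : F, ψ (c * f x) := by
    have swap : ∑ c : ZMod p, ψ (c * (-t)) * ∑ x : F, ψ (c * f x)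
        = ∑ x : F, ∑ c : ZMod p, ψ (c * (f x - t)) := by
      simp_rw [Finset.mul_sum]
      rw [Finset.sum_comm]
      refine Finset.sum_congr rfl fun x _ => Finset.sum_congr rfl fun c _ => ?_
      rw [show c * (f x - t) = c * f x + c * (-t) by ring, AddChar.map_add_eq_mul]
      ring
    rw [swap]
    have inner : ∀ x : F, ∑ c : ZMod p, ψ (c * (f x - t))
        = if f x = t then (p:ℂ) else 0 := by
      intro x
      rw [AddChar.sum_mulShift (f x - t) hψ, ZMod.card]
      simp only [sub_eq_zero]
      split_ifs <;> simp
    rw [Finset.sum_congr rfl fun x _ => inner x, ← Finset.sum_filter,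
      Finset.sum_const, hN, nsmul_eq_mul]
  have hsplit : ∀ g : ZMod p → ℂ, ∑ c : ZMod p, g c
      = ∑ c ∈ univ \ {(0 : ZMod p)}, g c + g 0 := fun g =>
    (Finset.sum_eq_sum_sdiff_singleton_add (Finset.mem_univ (0 : ZMod p)) g)
  have hzero : ψ ((0 : ZMod p) * (-t)) * ∑ x : F, ψ ((0:ZMod p) * f x) = (p:ℂ) ^ m := by
    rw [zero_mul, AddChar.map_zero_eq_one, one_mul]
    have : ∀ x : F, ψ ((0:ZMod p) * f x) = 1 := fun x => by
      rw [zero_mul, AddChar.map_zero_eq_one]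
    rw [Finset.sum_congr rfl fun x _ => this x, Finset.sum_const, Finset.card_univ, hcard]
    simp
  have hsum_erase : ∑ c ∈ univ \ {(0 : ZMod p)}, ψ (c * (-t)) = -1 := by
    have h0 := AddChar.sum_mulShift (-t) hψ
    rw [if_neg (neg_ne_zero.mpr ht)] at h0
    have h1 := hsplit (fun c => ψ (c * (-t)))
    rw [h0] at h1
    rw [zero_mul, AddChar.map_zero_eq_one] at h1
    linear_combination -h1
  have hpm : (p:ℂ) ^ (m - 1) * p = (p:ℂ) ^ m := by
    conv_rhs => rw [show m = (m - 1) + 1 from (Nat.succ_pred_eq_of_pos (NeZero.pos m)).symm]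
    rw [pow_succ]
  set E := ε * (p:ℂ) ^ m * GP p ^ (-(r:ℤ)) with hEdef
  have hchine : ∀ c : ZMod p, c ≠ 0 → χ c = 1 ∨ χ c = -1 := by
    intro c hc
    rcases hχ c with h | h | h
    · exfalso
      have h2 := chi_sq_one χ hχ hc
      rw [h, zero_mul] at h2
      exact zero_ne_one h2
    · exact Or.inl h
    · exact Or.inr h
  constructor
  · -- even case
    intro hre
    have hchi1 : ∀ c : ZMod p, c ≠ 0 → χ c ^ r = 1 := by
      intro c hc
      rcases hchine c hc with h | h
      · rw [h, one_pow]
      · rw [h, hre.neg_one_pow]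
    have hRHS : ∑ c : ZMod p, ψ (c * (-t)) * ∑ x : F, ψ (c * f x) = (p:ℂ) ^ m - E := by
      rw [hsplit (fun c => ψ (c * (-t)) * ∑ x : F, ψ (c * f x)), hzero]
      have heq : ∑ c ∈ univ \ {(0:ZMod p)}, ψ (c * (-t)) * ∑ x : F, ψ (c * f x)
          = ∑ c ∈ univ \ {(0:ZMod p)}, ψ (c * (-t)) * E := by
        refine Finset.sum_congr rfl fun c hc => ?_
        have hc0 : c ≠ 0 := by
          rcases Finset.mem_sdiff.mp hc with ⟨-, h2⟩
          simpa using h2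
        rw [hE c hc0, hchi1 c hc0, one_mul]
      rw [heq, ← Finset.sum_mul, hsum_erase]
      ring
    apply mul_right_cancel₀ hpC
    rw [hNc, hRHS]
    calc (p:ℂ) ^ m - E
        = (p:ℂ) ^ (m-1) * p - ε * ((p:ℂ) ^ (m-1) * p) * GP p ^ (-(r:ℤ)) := by
          rw [hpm, hEdef]
          try ring
      _ = ((p:ℂ) ^ (m-1) - ε * (p:ℂ) ^ (m-1) * GP p ^ (-(r:ℤ))) * p := by ring
  · -- odd case
    intro hro
    have hchi1 : ∀ c : ZMod p, c ≠ 0 → χ c ^ r = χ c := by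
      intro c hc
      rcases hchine c hc with h | h
      · rw [h, one_pow]
      · rw [h, hro.neg_one_pow]
    have hgauss : ∑ c ∈ univ \ {(0:ZMod p)}, χ c * ψ (c * (-t)) = χ (-t) * GP p := by
      have h1 := hsplit (fun c => χ c * ψ (c * (-t)))
      have hzero' : χ (0:ZMod p) * ψ ((0:ZMod p) * (-t)) = 0 := by
        rw [χ.map_nonunit not_isUnit_zero, zero_mul]
      rw [hzero', add_zero] at h1
      have hfull : ∑ c : ZMod p, χ c * ψ (c * (-t)) = gaussSum χ (ψ.mulShift (-t)) := by
        refine Finset.sum_congr rfl fun c _ => ?_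
        rw [AddChar.mulShift_apply, mul_comm c (-t)]
      have h5 := gaussSum_mulShift χ ψ (Units.mk0 (-t) (neg_ne_zero.mpr ht))
      simp only [Units.val_mk0] at h5
      have hq := chi_sq_one χ hχ (neg_ne_zero.mpr ht)
      rw [← h1, hfull]
      calc gaussSum χ (ψ.mulShift (-t))
          = (χ (-t) * χ (-t)) * gaussSum χ (ψ.mulShift (-t)) := by rw [hq, one_mul]
        _ = χ (-t) * gaussSum χ ψ := by rw [mul_assoc, h5]
        _ = χ (-t) * GP p := by rw [hgs]
    have hRHS : ∑ c : ZMod p, ψ (c * (-t)) * ∑ x : F, ψ (c * f x)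
        = (p:ℂ) ^ m + χ (-t) * GP p * E := by
      rw [hsplit (fun c => ψ (c * (-t)) * ∑ x : F, ψ (c * f x)), hzero]
      have heq : ∑ c ∈ univ \ {(0:ZMod p)}, ψ (c * (-t)) * ∑ x : F, ψ (c * f x)
          = ∑ c ∈ univ \ {(0:ZMod p)}, (χ c * ψ (c * (-t))) * E := by
        refine Finset.sum_congr rfl fun c hc => ?_
        have hc0 : c ≠ 0 := by
          rcases Finset.mem_sdiff.mp hc with ⟨-, h2⟩
          simpa using h2
        rw [hE c hc0, hchi1 c hc0]
        ring
      rw [heq, ← Finset.sum_mul, hgauss]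
      ring
    have hGm : GP p * GP p ^ (-(r:ℤ)) = GP p ^ (-((r:ℤ) - 1)) := by
      rw [show -((r:ℤ) - 1) = 1 + -(r:ℤ) by ring, zpow_add₀ hGP, zpow_one]
    have hchiP : χ (-t) = chiP p (-t) := rfl
    apply mul_right_cancel₀ hpC
    rw [hNc, hRHS]
    calc (p:ℂ) ^ m + χ (-t) * GP p * E
        = (p:ℂ) ^ (m-1) * p + ε * χ (-t) * ((p:ℂ) ^ (m-1) * p)
            * (GP p * GP p ^ (-(r:ℤ))) := by
              rw [hpm, hEdef]
              try ring
      _ = ((p:ℂ) ^ (m-1) + ε * chiP p (-t) * (p:ℂ) ^ (m-1) * GP p ^ (-((r:ℤ) - 1))) * p := by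
          rw [hGm, hchiP]; ring
end
end

section
/- Let f be a homogeneous quadratic function on GF(q) with rank r_f and sign ε_f, let α ∈ Im(L_f) with x_α satisfying L_f(x_α) = −α/2 and f(x_α) ≠ 0, and define g : GF(q) → GF(p) by g(x) = f(x) − Tr(αx)²/(4 f(x_α)). Then ∑_{x∈GF(q)} ζ_p^{g(x)} = ε_f η̄(−f(x_α)) p^m (p*)^{−(r_f−1)/2}. -/
noncomputable section

open Finset

lemma sum_psi_sq {p : ℕ} [Fact p.Prime] (hp2 : p ≠ 2) {ψ : AddChar (ZMod p) ℂ}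
    (hψ : ψ.IsPrimitive) {A : ZMod p} (hA : A ≠ 0) :
    ∑ d : ZMod p, ψ (A * d ^ 2)
      = ((quadraticChar (ZMod p)).ringHomComp (Int.castRingHom ℂ)) A
        * gaussSum ((quadraticChar (ZMod p)).ringHomComp (Int.castRingHom ℂ)) ψ := by
  classical
  set χ := (quadraticChar (ZMod p)).ringHomComp (Int.castRingHom ℂ) with hχ
  have hchar2 : ringChar (ZMod p) ≠ 2 := by rw [ZMod.ringChar_zmod_n]; exact hp2
  have h1 : ∑ d : ZMod p, ψ (A * d ^ 2)
      = ∑ t : ZMod p, ∑ d : ZMod p with d ^ 2 = t, ψ (A * t) :=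
    (Finset.sum_fiberwise_of_maps_to' (g := fun d : ZMod p => d ^ 2) (fun d _ => Finset.mem_univ (d ^ 2)) (fun t => ψ (A * t))).symm
  have h2 : ∀ t : ZMod p,
      ∑ d : ZMod p with d ^ 2 = t, ψ (A * t) = (χ t + 1) * ψ (A * t) := by
    intro t
    rw [Finset.sum_const, nsmul_eq_mul]
    congr 1
    have hcard := quadraticChar_card_sqrts hchar2 t
    rw [Set.toFinset_setOf] at hcard
    have : ((#{d : ZMod p | d ^ 2 = t} : ℤ) : ℂ) = ((quadraticChar (ZMod p) t + 1 : ℤ) : ℂ) := by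
      exact_mod_cast congrArg (fun z : ℤ => (z : ℂ)) hcard
    simpa [hχ, MulChar.ringHomComp] using this
  rw [h1]
  simp_rw [h2, add_mul, one_mul, Finset.sum_add_distrib]
  have h3 : ∑ t : ZMod p, ψ (A * t) = 0 := by
    have := AddChar.sum_mulShift (ψ := ψ) A hψ
    rw [if_neg hA] at this
    simpa [mul_comm] using this
  have hAu : IsUnit A := hA.isUnit
  have h4 : χ hAu.unit * gaussSum χ (ψ.mulShift hAu.unit) = gaussSum χ ψ :=
    gaussSum_mulShift χ ψ hAu.unit
  have hquad : χ.IsQuadratic := (quadraticChar_isQuadratic (ZMod p)).comp _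
  have hχA : χ A * χ A = 1 := by
    have h0 : (quadraticChar (ZMod p) A) * (quadraticChar (ZMod p) A) = 1 := by
      rcases (quadraticChar_isQuadratic (ZMod p)) A with h | h | h
      · exact absurd h (fun h => hA (quadraticChar_eq_zero_iff.mp h))
      · rw [h]; ring
      · rw [h]; ring
    have := congrArg (fun z : ℤ => (z : ℂ)) h0
    simpa [hχ, MulChar.ringHomComp] using this
  have h5 : ∑ t : ZMod p, χ t * ψ (A * t) = χ A * gaussSum χ ψ := by
    have : gaussSum χ (ψ.mulShift A) = ∑ t : ZMod p, χ t * ψ (A * t) := by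
      simp [gaussSum, AddChar.mulShift_apply]
    rw [← this, ← h4]
    have hu : (hAu.unit : ZMod p) = A := hAu.unit_spec
    rw [hu, ← mul_assoc, hχA, one_mul]
  rw [h3, h5, add_zero]

theorem stmt10
    (p m : ℕ) [Fact p.Prime] (hp2 : p ≠ 2) [NeZero m]
    (F : Type) [Field F] [Fintype F] [DecidableEq F] [Algebra (ZMod p) F]
    (hcard : Fintype.card F = p ^ m)
    -- `f` is a homogeneous quadratic function with coefficients `a`
    (f : F → ZMod p) (a : ZMod m → F)
    (hf : ∀ x, f x = ∑ i : ZMod m,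
      Algebra.trace (ZMod p) F (a i * x ^ (p ^ (i.val) + 1)))
    -- `L` is the associated linear map `L_f`
    (L : F → F)
    (hL : ∀ x, L x = (2 : F)⁻¹ *
      ∑ i : ZMod m, (a i + a (-i) ^ (p ^ (i.val))) * x ^ (p ^ (i.val)))
    -- `r` is the rank of `f` (so that `#Ker L_f = p^(m-r)`)
    (r : ℕ) (hrm : r ≤ m)
    (hker : {x : F | L x = 0}.ncard = p ^ (m - r))
    -- `ε` is the sign of `f`
    (ε : ℂ) (hε : ε = 1 ∨ ε = -1)
    (hsign : ∑ x : F, eP p (f x) = ε * (p : ℂ) ^ m * GP p ^ (-(r : ℤ)))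
    (α : F) (hα : α ∈ Set.range L)
    (xα : F) (hxα : L xα = -(α / 2)) (hfxα : f xα ≠ 0) :
    ∑ x : F, eP p (f x - (Algebra.trace (ZMod p) F (α * x)) ^ 2 / (4 * f xα))
      = ε * chiP p (-(f xα)) * (p : ℂ) ^ m * GP p ^ (-((r : ℤ) - 1)) := by
  classical
  have hp : p.Prime := Fact.out
  haveI : NeZero p := ⟨hp.ne_zero⟩
  haveI : CharP F p := charP_of_injective_algebraMap (algebraMap (ZMod p) F).injective p
  haveI : ExpChar F p := ExpChar.prime hp
  -- characters
  have hζ : zetaP p ^ p = 1 := (Complex.isPrimitiveRoot_exp p hp.ne_zero).pow_eq_one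
  set ψ : AddChar (ZMod p) ℂ := AddChar.zmodChar p hζ with hψdef
  have hψprim : ψ.IsPrimitive :=
    AddChar.zmodChar_primitive_of_primitive_root p (Complex.isPrimitiveRoot_exp p hp.ne_zero)
  have heP : ∀ c : ZMod p, eP p c = ψ c := fun c => rfl
  set χ : MulChar (ZMod p) ℂ := (quadraticChar (ZMod p)).ringHomComp (Int.castRingHom ℂ)
    with hχdef
  have hchi : ∀ c : ZMod p, chiP p c = χ c := fun c => rfl
  have hGPeq : GP p = gaussSum χ ψ := rfl
  have hchar2 : ringChar (ZMod p) ≠ 2 := by rw [ZMod.ringChar_zmod_n]; exact hp2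
  have hχne : χ ≠ 1 :=
    (MulChar.ringHomComp_ne_one_iff (RingHom.injective_int _)).mpr (quadraticChar_ne_one hchar2)
  have hquad : χ.IsQuadratic := (quadraticChar_isQuadratic (ZMod p)).comp _
  have hpC : (p : ℂ) ≠ 0 := Nat.cast_ne_zero.mpr hp.ne_zero
  have hcards : ((Fintype.card (ZMod p) : ℂ)) ≠ 0 := by rw [ZMod.card]; exact hpC
  have hGne : gaussSum χ ψ ≠ 0 := gaussSum_ne_zero_of_nontrivial hcards hχne hψprim
  have hG2 : gaussSum χ ψ * gaussSum χ ψ = χ (-1) * p := by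
    have := gaussSum_sq hχne hquad hψprim
    rw [pow_two] at this
    rw [this, ZMod.card]
  have hχsq : ∀ {c : ZMod p}, c ≠ 0 → χ c * χ c = 1 := by
    intro c hc
    have h0 : (quadraticChar (ZMod p) c) * (quadraticChar (ZMod p) c) = 1 := by
      rcases (quadraticChar_isQuadratic (ZMod p)) c with h | h | h
      · exact absurd (quadraticChar_eq_zero_iff.mp h) hc
      · rw [h]; ring
      · rw [h]; ring
    have := congrArg (fun z : ℤ => (z : ℂ)) h0
    simpa [hχdef, MulChar.ringHomComp] using this
  -- field-side preliminaries
  have h2Z : (2 : ZMod p) ≠ 0 := by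
    intro h
    have hd : p ∣ 2 := by
      have : ((2 : ℕ) : ZMod p) = 0 := by exact_mod_cast h
      exact (ZMod.natCast_eq_zero_iff 2 p).mp this
    exact hp2 ((Nat.prime_dvd_prime_iff_eq hp Nat.prime_two).mp hd)
  have h2F : (2 : F) ≠ 0 := by
    have h2 : algebraMap (ZMod p) F 2 = (2 : F) := map_ofNat _ 2
    rw [← h2]
    exact fun h => h2Z ((algebraMap (ZMod p) F).injective (by rw [h, map_zero]))
  -- trace and Frobenius
  have hpowm : ∀ x : F, x ^ p ^ m = x := by
    intro x
    have := FiniteField.pow_card x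
    rwa [hcard] at this
  have hsc : ∀ (c : ZMod p) (k : ℕ), (algebraMap (ZMod p) F c) ^ p ^ k
      = algebraMap (ZMod p) F c := by
    intro c k
    rw [← map_pow]
    congr 1
    have := FiniteField.pow_card_pow k c
    rwa [ZMod.card] at this
  have htr1 : ∀ x : F, Algebra.trace (ZMod p) F (x ^ p) = Algebra.trace (ZMod p) F x := by
    intro x
    exact Algebra.trace_eq_of_algEquiv
      { frobeniusEquiv F p with
        commutes' := fun c => by
          show (algebraMap (ZMod p) F c) ^ p = algebraMap (ZMod p) F c
          rw [← map_pow, ZMod.pow_card] } x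
  have htr : ∀ (k : ℕ) (x : F),
      Algebra.trace (ZMod p) F (x ^ p ^ k) = Algebra.trace (ZMod p) F x := by
    intro k
    induction k with
    | zero => intro x; simp
    | succ k ih => intro x; rw [pow_succ, pow_mul, htr1, ih]
  have htrsmul : ∀ (c : ZMod p) (w : F),
      Algebra.trace (ZMod p) F (algebraMap (ZMod p) F c * w)
        = c * Algebra.trace (ZMod p) F w := by
    intro c w
    rw [← Algebra.smul_def, map_smul, smul_eq_mul]
  have hcanc : ∀ (i : ZMod m) (w : F), (w ^ p ^ i.val) ^ p ^ (-i).val = w := by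
    intro i w
    rw [← pow_mul, ← pow_add]
    by_cases hi : i = 0
    · simp [hi]
    · have hv : i.val + (-i).val = m := by
        rw [ZMod.neg_val, if_neg hi]
        have := ZMod.val_lt i
        omega
      rw [hv]; exact hpowm w
  set Tr := Algebra.trace (ZMod p) F with hTrdef
  set S : F → F := fun y => ∑ i : ZMod m, (a i + a (-i) ^ p ^ i.val) * y ^ p ^ i.val with hS
  have crossswap : ∀ x y : F, ∑ i : ZMod m, Tr (a i * (x ^ p ^ i.val * y))
      = ∑ i : ZMod m, Tr (a (-i) ^ p ^ i.val * (y ^ p ^ i.val * x)) := by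
    intro x y
    rw [← Equiv.sum_comp (Equiv.neg (ZMod m))
      (fun i => Tr (a (-i) ^ p ^ i.val * (y ^ p ^ i.val * x)))]
    refine Finset.sum_congr rfl fun j _ => ?_
    rw [Equiv.neg_apply, neg_neg]
    rw [← htr ((-j).val) (a j * (x ^ p ^ j.val * y))]
    congr 1
    rw [mul_pow, mul_pow, hcanc j x]
    ring
  have hB : ∀ x y : F, f (x + y) = f x + f y + Tr (S y * x) := by
    intro x y
    have hTrS : Tr (S y * x)
        = (∑ i : ZMod m, Tr (a i * (x ^ p ^ i.val * y)))
          + ∑ i : ZMod m, Tr (a i * (y ^ p ^ i.val * x)) := by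
      rw [crossswap x y]
      simp only [hS]
      rw [Finset.sum_mul, map_sum, ← Finset.sum_add_distrib]
      refine Finset.sum_congr rfl fun i _ => ?_
      rw [← map_add]
      congr 1
      ring
    calc f (x + y) = ∑ i : ZMod m, Tr (a i * (x + y) ^ (p ^ i.val + 1)) := hf _
    _ = ∑ i : ZMod m, (Tr (a i * x ^ (p ^ i.val + 1)) + Tr (a i * y ^ (p ^ i.val + 1))
          + (Tr (a i * (x ^ p ^ i.val * y)) + Tr (a i * (y ^ p ^ i.val * x)))) := by
        refine Finset.sum_congr rfl fun i _ => ?_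
        rw [← map_add, ← map_add, ← map_add]
        congr 1
        rw [pow_succ, add_pow_char_pow, pow_succ, pow_succ]
        ring
    _ = f x + f y + Tr (S y * x) := by
        rw [Finset.sum_add_distrib, Finset.sum_add_distrib, Finset.sum_add_distrib,
          ← hf x, ← hf y, hTrS]
  have hfsc : ∀ (c : ZMod p) (y : F), f (algebraMap (ZMod p) F c * y) = c ^ 2 * f y := by
    intro c y
    rw [hf, hf y, Finset.mul_sum]
    refine Finset.sum_congr rfl fun i _ => ?_
    rw [← htrsmul (c ^ 2)]
    congr 1
    rw [mul_pow, pow_succ (algebraMap (ZMod p) F c), hsc c i.val, map_pow]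
    ring
  have hSsc : ∀ (c : ZMod p) (y : F),
      S (algebraMap (ZMod p) F c * y) = algebraMap (ZMod p) F c * S y := by
    intro c y
    simp only [hS]
    rw [Finset.mul_sum]
    refine Finset.sum_congr rfl fun i _ => ?_
    rw [mul_pow, hsc]
    ring
  have hSL : ∀ y : F, S y = 2 * L y := by
    intro y
    rw [hL y, ← mul_assoc, mul_inv_cancel₀ h2F, one_mul]
  have hSα : S xα = -α := by
    have h2 : (2 : F) * (α / 2) = α := by rw [mul_comm, div_mul_cancel₀ _ h2F]
    rw [hSL, hxα, mul_neg, h2]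
  have step1 : ∀ (x : F) (c : ZMod p),
      f (x + algebraMap (ZMod p) F c * xα)
        = f x + c ^ 2 * f xα - c * Tr (α * x) := by
    intro x c
    rw [hB x (algebraMap (ZMod p) F c * xα), hfsc, hSsc, hSα]
    have h1 : algebraMap (ZMod p) F c * -α * x = algebraMap (ZMod p) F c * -(α * x) := by
      ring
    rw [h1, htrsmul, map_neg]
    ring
  have h4Z : (4 : ZMod p) ≠ 0 := by
    have : (4 : ZMod p) = 2 * 2 := by norm_num
    rw [this]; exact mul_ne_zero h2Z h2Z
  have h4A : (4 : ZMod p) * f xα ≠ 0 := mul_ne_zero h4Z hfxα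
  have h2A : (2 : ZMod p) * f xα ≠ 0 := mul_ne_zero h2Z hfxα
  have step2 : ∀ x : F, ∑ c : ZMod p, ψ (f (x + algebraMap (ZMod p) F c * xα))
      = χ (f xα) * gaussSum χ ψ * ψ (f x - Tr (α * x) ^ 2 / (4 * f xα)) := by
    intro x
    have hsq : ∀ c : ZMod p, f x + c ^ 2 * f xα - c * Tr (α * x)
        = (f x - Tr (α * x) ^ 2 / (4 * f xα))
          + f xα * (c - Tr (α * x) / (2 * f xα)) ^ 2 := by
      intro c
      field_simp
      ring
    simp_rw [step1 x, hsq, AddChar.map_add_eq_mul]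
    rw [← Finset.mul_sum]
    have hre : ∑ c : ZMod p, ψ (f xα * (c - Tr (α * x) / (2 * f xα)) ^ 2)
        = ∑ d : ZMod p, ψ (f xα * d ^ 2) :=
      Fintype.sum_equiv (Equiv.subRight (Tr (α * x) / (2 * f xα))) _ _ (fun c => rfl)
    rw [hre, sum_psi_sq hp2 hψprim hfxα, ← hχdef]
    ring
  have step3 : ∑ x : F, ∑ c : ZMod p, ψ (f (x + algebraMap (ZMod p) F c * xα))
      = (p : ℂ) * (ε * (p : ℂ) ^ m * gaussSum χ ψ ^ (-(r : ℤ))) := by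
    rw [Finset.sum_comm]
    have hinner : ∀ c : ZMod p, ∑ x : F, ψ (f (x + algebraMap (ZMod p) F c * xα))
        = ∑ x : F, ψ (f x) := fun c =>
      Fintype.sum_equiv (Equiv.addRight (algebraMap (ZMod p) F c * xα)) _ _ (fun x => rfl)
    simp_rw [hinner]
    rw [Finset.sum_const, Finset.card_univ, ZMod.card, nsmul_eq_mul]
    have hsign' : ∑ x : F, ψ (f x) = ε * (p : ℂ) ^ m * gaussSum χ ψ ^ (-(r : ℤ)) := by
      simpa only [heP, hGPeq] using hsign
    rw [hsign']
  have main : (χ (f xα) * gaussSum χ ψ)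
        * ∑ x : F, ψ (f x - Tr (α * x) ^ 2 / (4 * f xα))
      = (p : ℂ) * (ε * (p : ℂ) ^ m * gaussSum χ ψ ^ (-(r : ℤ))) := by
    rw [Finset.mul_sum, ← step3]
    exact Finset.sum_congr rfl fun x _ => (step2 x).symm
  have hχAne : χ (f xα) ≠ 0 := left_ne_zero_of_mul_eq_one (hχsq hfxα)
  have hne : χ (f xα) * gaussSum χ ψ ≠ 0 := mul_ne_zero hχAne hGne
  have hgoalL : ∑ x : F, eP p (f x - Tr (α * x) ^ 2 / (4 * f xα))
      = ∑ x : F, ψ (f x - Tr (α * x) ^ 2 / (4 * f xα)) := by simp only [heP]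
  rw [hgoalL, hchi, hGPeq]
  apply mul_left_cancel₀ hne
  rw [main]
  have hχneg : χ (-(f xα)) = χ (-1) * χ (f xα) := by
    rw [show -(f xα) = -1 * f xα by ring, map_mul]
  rw [hχneg, show (-((r : ℤ) - 1)) = 1 + -(r : ℤ) by ring, zpow_add₀ hGne, zpow_one]
  have e2 : χ (f xα) * χ (f xα) = 1 := hχsq hfxα
  have e3 : χ (-1) * χ (-1) = 1 := hχsq (neg_ne_zero.mpr one_ne_zero)
  linear_combination (-(ε * (p : ℂ) ^ m * gaussSum χ ψ ^ (-(r : ℤ)) * χ (-1)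
      * (gaussSum χ ψ * gaussSum χ ψ))) * e2
    + (-(ε * (p : ℂ) ^ m * gaussSum χ ψ ^ (-(r : ℤ)) * χ (-1))) * hG2
    + (-(ε * (p : ℂ) ^ m * gaussSum χ ψ ^ (-(r : ℤ)) * (p : ℂ))) * e3
end
end

section
/- Let f be a homogeneous quadratic function on GF(q) with rank r_f and sign ε_f, let α ∈ Im(L_f) with x_α satisfying L_f(x_α) = −α/2 and f(x_α) ≠ 0, and define g(x) = f(x) − Tr(αx)²/(4 f(x_α)). For t ∈ GF(p), set N(g = t) = #{x ∈ GF(q) : g(x) = t}. Then: N(g = t) = p^{m−1} if r_f is even and t = 0; N(g = t) = p^{m−1} + ε_f η̄(−t) η̄(−f(x_α)) p^{m−1} (p*)^{−(r_f−2)/2} if r_f is even and t ≠ 0; N(g = t) = p^{m−1} + ε_f η̄(−f(x_α)) (p−1) p^{m−1} (p*)^{−(r_f−1)/2} if r_f is odd and t = 0; and N(g = t) = p^{m−1} − ε_f η̄(−f(x_α)) p^{m−1} (p*)^{−(r_f−1)/2} if r_f is odd and t ≠ 0. -/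
noncomputable section

open Finset

namespace Aux

variable (p : ℕ) [Fact p.Prime]

lemma zetaP_prim : IsPrimitiveRoot (zetaP p) p :=
  Complex.isPrimitiveRoot_exp p (Fact.out : p.Prime).ne_zero

lemma zetaP_pow : zetaP p ^ p = 1 := (zetaP_prim p).pow_eq_one

/-- `eP` as a bundled additive character. -/
def psiP : AddChar (ZMod p) ℂ := AddChar.zmodChar p (zetaP_pow p)

lemma eP_eq (c : ZMod p) : eP p c = psiP p c := rfl

lemma psiP_prim : (psiP p).IsPrimitive :=
  AddChar.zmodChar_primitive_of_primitive_root p (zetaP_prim p)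

lemma eP_add (a b : ZMod p) : eP p (a + b) = eP p a * eP p b := by
  rw [eP_eq, eP_eq, eP_eq]; exact AddChar.map_add_eq_mul _ a b

lemma eP_zero : eP p 0 = 1 := by
  rw [eP_eq]; exact AddChar.map_zero_eq_one _

lemma sum_eP_mul (s : ZMod p) :
    ∑ y : ZMod p, eP p (y * s) = if s = 0 then (p : ℂ) else 0 := by
  split_ifs with hs
  · subst hs; simp only [mul_zero, eP_zero, Finset.sum_const, card_univ, ZMod.card,
      nsmul_eq_mul, mul_one]
  · have h1 : (psiP p).mulShift s ≠ 1 := psiP_prim p hs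
    have := AddChar.sum_eq_zero_of_ne_one h1
    calc ∑ y : ZMod p, eP p (y * s) = ∑ y : ZMod p, ((psiP p).mulShift s) y := by
          refine Finset.sum_congr rfl fun y _ => ?_
          rw [AddChar.mulShift_apply, mul_comm, eP_eq]
      _ = 0 := this

lemma chiP_eq (c : ZMod p) :
    chiP p c = ((quadraticChar (ZMod p)).ringHomComp (Int.castRingHom ℂ)) c := by
  rw [MulChar.ringHomComp_apply]; rfl

lemma chiP_mul (a b : ZMod p) : chiP p (a * b) = chiP p a * chiP p b := by
  simp only [chiP_eq, map_mul]

lemma chiP_zero : chiP p 0 = 0 := by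
  simp [chiP, quadraticChar_eq_zero_iff]

lemma chiP_one : chiP p 1 = 1 := by
  simp [chiP]

lemma chiP_sq {a : ZMod p} (ha : a ≠ 0) : chiP p a * chiP p a = 1 := by
  have h : quadraticChar (ZMod p) a ^ 2 = 1 := quadraticChar_sq_one ha
  simp only [chiP]
  rw [← Int.cast_mul, ← sq, h, Int.cast_one]

lemma chiP_inv (a : ZMod p) : chiP p a⁻¹ = chiP p a := by
  rcases eq_or_ne a 0 with h | h
  · simp [h]
  · have h1 : chiP p a⁻¹ * chiP p a = 1 := by
      rw [← chiP_mul, inv_mul_cancel₀ h, chiP_one]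
    have h2 := chiP_sq p h
    calc chiP p a⁻¹ = chiP p a⁻¹ * (chiP p a * chiP p a) := by rw [h2, mul_one]
      _ = (chiP p a⁻¹ * chiP p a) * chiP p a := by ring
      _ = chiP p a := by rw [h1, one_mul]

lemma eP_ne_one {c : ZMod p} (hc : c ≠ 0) : eP p c ≠ 1 := by
  rw [eP_eq]
  intro h
  exact hc (((psiP_prim p).zmod_char_eq_one_iff p c).mp h)

omit [Fact p.Prime] in
/-- Character-sum shift trick: a nontrivial multiplicative-valued additive map sums to zero. -/
lemma sum_shift_zero {G : Type*} [AddCommGroup G] [Fintype G] (h : G → ℂ)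
    (hadd : ∀ a b : G, h (a + b) = h a * h b) (w : G) (hw : h w ≠ 1) :
    ∑ z : G, h z = 0 := by
  have key : h w * ∑ z : G, h z = ∑ z : G, h z := by
    rw [Finset.mul_sum]
    exact Fintype.sum_equiv (Equiv.addLeft w) _ _ (fun z => by
      rw [← hadd]; rfl)
  have : (h w - 1) * ∑ z : G, h z = 0 := by linear_combination key
  rcases mul_eq_zero.mp this with h1 | h1
  · exact absurd (by linear_combination h1) hw
  · exact h1

/-- Nondegeneracy of the trace form. -/
lemma trace_nd (F : Type*) [Field F] [Fintype F] [Algebra (ZMod p) F] {β : F} (hβ : β ≠ 0) :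
    ∃ z : F, Algebra.trace (ZMod p) F (β * z) ≠ 0 := by
  haveI : CharP F p := charP_of_injective_algebraMap (algebraMap (ZMod p) F).injective p
  have hrc : ringChar F = p := ringChar.eq F p
  subst hrc
  exact FiniteField.trace_to_zmod_nondegenerate F hβ


variable (hp2 : p ≠ 2)
include hp2

lemma ringChar_ne_two : ringChar (ZMod p) ≠ 2 := by
  rw [ZMod.ringChar_zmod_n]; exact hp2

lemma chiP_sum : ∑ a : ZMod p, chiP p a = 0 := by
  have := quadraticChar_sum_zero (ringChar_ne_two p hp2)
  simp only [chiP]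
  rw [← Int.cast_sum, this, Int.cast_zero]

lemma GP_eq : GP p = gaussSum ((quadraticChar (ZMod p)).ringHomComp (Int.castRingHom ℂ)) (psiP p) := by
  unfold GP gaussSum
  exact Finset.sum_congr rfl fun c _ => by rw [chiP_eq, eP_eq]

lemma chiC_ne_one : (quadraticChar (ZMod p)).ringHomComp (Int.castRingHom ℂ) ≠ 1 :=
  (MulChar.ringHomComp_ne_one_iff Int.cast_injective).mpr
    (quadraticChar_ne_one (ringChar_ne_two p hp2))

lemma GP_sq : GP p ^ 2 = chiP p (-1) * p := by
  rw [GP_eq p hp2, gaussSum_sq (chiC_ne_one p hp2)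
    ((quadraticChar_isQuadratic (ZMod p)).comp _) (psiP_prim p), chiP_eq, ZMod.card]

lemma GP_ne_zero : GP p ≠ 0 := by
  intro h
  have h2 := GP_sq p hp2
  rw [h, zero_pow two_ne_zero] at h2
  have hm1 : (-1 : ZMod p) ≠ 0 := by
    intro hh
    have : (1 : ZMod p) = 0 := by linear_combination -hh
    exact one_ne_zero this
  have : chiP p (-1) ≠ 0 := by
    simp only [chiP, ne_eq, Int.cast_eq_zero]
    exact_mod_cast (quadraticChar_eq_zero_iff (F := ZMod p)).not.mpr hm1
  have hpne : (p : ℂ) ≠ 0 := by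
    exact_mod_cast (Fact.out : p.Prime).ne_zero
  exact (mul_ne_zero this hpne) h2.symm

/-- Gauss sum with a multiplicative shift. -/
lemma gauss_shift {s : ZMod p} (hs : s ≠ 0) :
    ∑ y : ZMod p, chiP p y * eP p (s * y) = chiP p s * GP p := by
  have key : chiP p s * (∑ y : ZMod p, chiP p y * eP p (s * y)) = GP p := by
    rw [Finset.mul_sum]
    unfold GP
    refine Fintype.sum_equiv (Equiv.mulLeft₀ s hs) _ _ fun y => ?_
    have he : (Equiv.mulLeft₀ s hs) y = s * y := rfl
    rw [he, ← mul_assoc, ← chiP_mul]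
  calc ∑ y : ZMod p, chiP p y * eP p (s * y)
      = (chiP p s * chiP p s) * (∑ y : ZMod p, chiP p y * eP p (s * y)) := by
        rw [chiP_sq p hs, one_mul]
    _ = chiP p s * GP p := by rw [mul_assoc, key]

/-- Gauss sum variant valid for all `s` (including `s = 0`). -/
lemma gauss_shift' (s : ZMod p) :
    ∑ y : ZMod p, chiP p y * eP p (s * y) = chiP p s * GP p := by
  rcases eq_or_ne s 0 with h | h
  · simp only [h, zero_mul, eP_zero, mul_one, chiP_zero, zero_mul]
    exact chiP_sum p hp2
  · exact gauss_shift p hp2 h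

/-- The quadratic Gauss sum over squares. -/
lemma sum_squares {d : ZMod p} (hd : d ≠ 0) :
    ∑ u : ZMod p, eP p (d * u ^ 2) = chiP p d * GP p := by
  have fib := Finset.sum_fiberwise_eq_sum_filter (univ : Finset (ZMod p)) (univ : Finset (ZMod p))
    (fun u => u ^ 2) (fun u => eP p (d * u ^ 2))
  have hcard : ∀ s : ZMod p, ((univ.filter (fun u : ZMod p => u ^ 2 = s)).card : ℂ)
      = 1 + chiP p s := by
    intro s
    have h0 := quadraticChar_card_sqrts (ringChar_ne_two p hp2) s
    have hfin : {x : ZMod p | x ^ 2 = s}.toFinset = univ.filter (fun u : ZMod p => u ^ 2 = s) := by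
      ext u; simp
    rw [hfin] at h0
    simp only [chiP]
    have : (((univ.filter (fun u : ZMod p => u ^ 2 = s)).card : ℤ) : ℂ)
        = ((quadraticChar (ZMod p) s + 1 : ℤ) : ℂ) := by rw [h0]
    push_cast at this ⊢
    rw [this]; ring
  calc ∑ u : ZMod p, eP p (d * u ^ 2)
      = ∑ s : ZMod p, ∑ u ∈ univ.filter (fun u : ZMod p => u ^ 2 = s), eP p (d * u ^ 2) := by
        rw [fib]
        apply Finset.sum_congr
        · ext u; simp
        · intros; rfl
    _ = ∑ s : ZMod p, ((univ.filter (fun u : ZMod p => u ^ 2 = s)).card : ℂ) * eP p (d * s) := by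
        refine Finset.sum_congr rfl fun s _ => ?_
        rw [Finset.sum_congr rfl (fun u hu => by rw [(Finset.mem_filter.mp hu).2]),
          Finset.sum_const, nsmul_eq_mul]
    _ = ∑ s : ZMod p, (eP p (d * s) + chiP p s * eP p (d * s)) := by
        refine Finset.sum_congr rfl fun s _ => ?_
        rw [hcard s]; ring
    _ = chiP p d * GP p := by
        rw [Finset.sum_add_distrib]
        have hz : ∑ s : ZMod p, eP p (d * s) = 0 := by
          have h := sum_eP_mul p d
          rw [if_neg hd] at h
          rw [← h]
          exact Finset.sum_congr rfl fun s _ => by rw [mul_comm]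
        rw [hz, zero_add]
        exact gauss_shift p hp2 hd


lemma GP_not_rat (q : ℚ) : (q : ℂ) ≠ GP p := by
  intro hq
  have hsq := GP_sq p hp2
  have hne := GP_ne_zero p hp2
  rcases (quadraticChar_isQuadratic (ZMod p)) (-1) with h | h | h
  · rw [chiP, h] at hsq
    simp only [Int.cast_zero, zero_mul] at hsq
    exact hne (pow_eq_zero_iff two_ne_zero |>.mp hsq)
  · rw [chiP, h] at hsq
    simp only [Int.cast_one, one_mul] at hsq
    rw [← hq] at hsq
    have hq2 : (q ^ 2 : ℚ) = (p : ℚ) := by exact_mod_cast hsq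
    have hirr := (Fact.out : p.Prime).irrational_sqrt
    apply hirr
    have hr : ((q : ℝ)) ^ 2 = (p : ℝ) := by exact_mod_cast hq2
    refine ⟨|q|, ?_⟩
    rw [← hr, Real.sqrt_sq_eq_abs]
    push_cast
    ring
  · rw [chiP, h] at hsq
    rw [← hq] at hsq
    have hq2 : (q ^ 2 : ℚ) = ((-1 : ℤ) : ℚ) * (p : ℚ) := by exact_mod_cast hsq
    push_cast at hq2
    have hppos : (0 : ℚ) < (p : ℚ) := by exact_mod_cast (Fact.out : p.Prime).pos
    nlinarith [sq_nonneg q]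

end Aux

theorem stmt11
    (p m : ℕ) [Fact p.Prime] (hp2 : p ≠ 2) [NeZero m]
    (F : Type) [Field F] [Fintype F] [DecidableEq F] [Algebra (ZMod p) F]
    (hcard : Fintype.card F = p ^ m)
    -- `f` is a homogeneous quadratic function with coefficients `a`
    (f : F → ZMod p) (a : ZMod m → F)
    (hf : ∀ x, f x = ∑ i : ZMod m,
      Algebra.trace (ZMod p) F (a i * x ^ (p ^ (i.val) + 1)))
    -- `L` is the associated linear map `L_f`
    (L : F → F)
    (hL : ∀ x, L x = (2 : F)⁻¹ *
      ∑ i : ZMod m, (a i + a (-i) ^ (p ^ (i.val))) * x ^ (p ^ (i.val)))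
    -- `r` is the rank of `f` (so that `#Ker L_f = p^(m-r)`)
    (r : ℕ) (hrm : r ≤ m)
    (hker : {x : F | L x = 0}.ncard = p ^ (m - r))
    -- `ε` is the sign of `f`
    (ε : ℂ) (hε : ε = 1 ∨ ε = -1)
    (hsign : ∑ x : F, eP p (f x) = ε * (p : ℂ) ^ m * GP p ^ (-(r : ℤ)))
    (α : F) (hα : α ∈ Set.range L)
    (xα : F) (hxα : L xα = -(α / 2)) (hfxα : f xα ≠ 0)
    (t : ZMod p) :
    (Even r → t = 0 → ({x : F | f x - (Algebra.trace (ZMod p) F (α * x)) ^ 2 / (4 * f xα) = t}.ncard : ℂ) = (p : ℂ) ^ (m - 1)) ∧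
    (Even r → t ≠ 0 →
      ({x : F | f x - (Algebra.trace (ZMod p) F (α * x)) ^ 2 / (4 * f xα) = t}.ncard : ℂ)
        = (p : ℂ) ^ (m - 1)
          + ε * chiP p (-t) * chiP p (-(f xα)) * (p : ℂ) ^ (m - 1)
            * GP p ^ (-((r : ℤ) - 2))) ∧
    (Odd r → t = 0 →
      ({x : F | f x - (Algebra.trace (ZMod p) F (α * x)) ^ 2 / (4 * f xα) = t}.ncard : ℂ)
        = (p : ℂ) ^ (m - 1)
          + ε * chiP p (-(f xα)) * ((p : ℂ) - 1) * (p : ℂ) ^ (m - 1)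
            * GP p ^ (-((r : ℤ) - 1))) ∧
    (Odd r → t ≠ 0 →
      ({x : F | f x - (Algebra.trace (ZMod p) F (α * x)) ^ 2 / (4 * f xα) = t}.ncard : ℂ)
        = (p : ℂ) ^ (m - 1)
          - ε * chiP p (-(f xα)) * (p : ℂ) ^ (m - 1)
            * GP p ^ (-((r : ℤ) - 1))) := by
  classical
  have hp : p.Prime := Fact.out
  have hpn0 : (p : ℂ) ≠ 0 := by exact_mod_cast hp.ne_zero
  haveI : CharP F p := charP_of_injective_algebraMap (algebraMap (ZMod p) F).injective p
  haveI : ExpChar F p := ExpChar.prime hp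
  have h2p : (2 : ZMod p) ≠ 0 := by
    intro h
    have h2 : ((2 : ℕ) : ZMod p) = 0 := by exact_mod_cast h
    have hdvd := (ZMod.natCast_eq_zero_iff 2 p).mp h2
    exact hp2 ((Nat.prime_dvd_prime_iff_eq hp Nat.prime_two).mp hdvd)
  have h2F : (2 : F) ≠ 0 := by
    have : ((2 : ℕ) : F) ≠ 0 := by
      rw [Ne, CharP.cast_eq_zero_iff F p]
      intro hdvd
      have h2' : ((2 : ℕ) : ZMod p) = 0 := (ZMod.natCast_eq_zero_iff 2 p).mpr hdvd
      exact h2p (by exact_mod_cast h2')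
    exact_mod_cast this
  have hmap2 : algebraMap (ZMod p) F 2 = 2 := by
    rw [show (2 : ZMod p) = ((2:ℕ) : ZMod p) by norm_cast, map_natCast]
    norm_cast
  have hcast : ∀ (c : ZMod p) (k : ℕ), (algebraMap (ZMod p) F c) ^ (p ^ k) = algebraMap (ZMod p) F c := by
    intro c k
    rw [← map_pow]
    congr 1
    induction k with
    | zero => simp
    | succ n ih => rw [pow_succ, pow_mul, ih, ZMod.pow_card]
  have hq : ∀ x : F, x ^ (p ^ m) = x := by
    intro x; rw [← hcard]; exact FiniteField.pow_card x
  -- trace is Frobenius-invariant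
  have htrfrob : ∀ z : F, Algebra.trace (ZMod p) F (z ^ p) = Algebra.trace (ZMod p) F z := by
    intro z
    let e : F ≃ₐ[ZMod p] F := AlgEquiv.ofRingEquiv (f := frobeniusEquiv F p)
      (fun c => by
        have := hcast c 1
        rw [pow_one] at this
        exact this)
    have he : e z = z ^ p := rfl
    have := Algebra.trace_eq_of_algEquiv e z
    rw [he] at this
    exact this
  have htrpow : ∀ (k : ℕ) (z : F), Algebra.trace (ZMod p) F (z ^ (p ^ k)) = Algebra.trace (ZMod p) F z := by
    intro k
    induction k with
    | zero => intro z; simp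
    | succ n ih =>
      intro z
      rw [pow_succ, pow_mul, htrfrob (z ^ p ^ n), ih]
  have htr_smul : ∀ (c : ZMod p) (w : F),
      Algebra.trace (ZMod p) F (algebraMap (ZMod p) F c * w) = c * Algebra.trace (ZMod p) F w := by
    intro c w
    rw [← Algebra.smul_def, map_smul, smul_eq_mul]
  -- the fundamental quadratic identity
  have hfadd : ∀ x y : F, f (x + y) = f x + f y + 2 * Algebra.trace (ZMod p) F (L x * y) := by
    intro x y
    have expand : ∀ i : ZMod m,
        Algebra.trace (ZMod p) F (a i * (x + y) ^ (p ^ i.val + 1))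
      = Algebra.trace (ZMod p) F (a i * x ^ (p ^ i.val + 1))
      + Algebra.trace (ZMod p) F (a i * y ^ (p ^ i.val + 1))
      + Algebra.trace (ZMod p) F (a i * x ^ (p ^ i.val) * y)
      + Algebra.trace (ZMod p) F (a i * (x * y ^ (p ^ i.val))) := by
      intro i
      rw [← map_add, ← map_add, ← map_add]
      congr 1
      rw [pow_succ, add_pow_char_pow, pow_succ, pow_succ]
      ring
    have cross : ∀ i : ZMod m,
        Algebra.trace (ZMod p) F (a i * (x * y ^ (p ^ i.val)))
      = Algebra.trace (ZMod p) F (a i ^ (p ^ (-i).val) * x ^ (p ^ (-i).val) * y) := by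
      intro i
      rcases eq_or_ne i 0 with h0 | h0
      · subst h0
        simp [ZMod.val_zero, pow_one, mul_assoc]
      · have hval : (-i).val = m - i.val := by
          rw [ZMod.neg_val]
          simp [h0]
        rw [← htrpow ((-i).val) (a i * (x * y ^ (p ^ i.val)))]
        congr 1
        rw [mul_pow, mul_pow, ← pow_mul]
        have hy : y ^ (p ^ i.val * p ^ (-i).val) = y := by
          rw [← pow_add, hval, Nat.add_sub_cancel' (le_of_lt (ZMod.val_lt i))]
          exact hq y
        rw [hy]
        ring
    have reindex : ∑ i : ZMod m, Algebra.trace (ZMod p) F (a i * (x * y ^ (p ^ i.val)))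
        = ∑ i : ZMod m, Algebra.trace (ZMod p) F (a (-i) ^ (p ^ i.val) * x ^ (p ^ i.val) * y) := by
      rw [Finset.sum_congr rfl (fun i _ => cross i)]
      exact Fintype.sum_equiv (Equiv.neg (ZMod m)) _ _ (fun i => by
        simp only [Equiv.neg_apply, neg_neg])
    have hsum2 : (∑ i : ZMod m, Algebra.trace (ZMod p) F (a i * x ^ (p ^ i.val) * y))
        + ∑ i : ZMod m, Algebra.trace (ZMod p) F (a (-i) ^ (p ^ i.val) * x ^ (p ^ i.val) * y)
        = 2 * Algebra.trace (ZMod p) F (L x * y) := by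
      rw [← Finset.sum_add_distrib]
      have hterm : ∀ i : ZMod m, Algebra.trace (ZMod p) F (a i * x ^ (p ^ i.val) * y)
          + Algebra.trace (ZMod p) F (a (-i) ^ (p ^ i.val) * x ^ (p ^ i.val) * y)
          = Algebra.trace (ZMod p) F ((a i + a (-i) ^ (p ^ i.val)) * x ^ (p ^ i.val) * y) := by
        intro i; rw [← map_add]; congr 1; ring
      rw [Finset.sum_congr rfl (fun i _ => hterm i)]
      have h2L : (2 : F) * L x = ∑ i : ZMod m, (a i + a (-i) ^ (p ^ i.val)) * x ^ (p ^ i.val) := by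
        rw [hL, ← mul_assoc, mul_inv_cancel₀ h2F, one_mul]
      calc ∑ i : ZMod m, Algebra.trace (ZMod p) F ((a i + a (-i) ^ (p ^ i.val)) * x ^ (p ^ i.val) * y)
          = Algebra.trace (ZMod p) F ((∑ i : ZMod m, (a i + a (-i) ^ (p ^ i.val)) * x ^ (p ^ i.val)) * y) := by
            rw [Finset.sum_mul, map_sum]
        _ = Algebra.trace (ZMod p) F ((2 : F) * L x * y) := by rw [h2L]
        _ = 2 * Algebra.trace (ZMod p) F (L x * y) := by
            rw [mul_assoc, ← hmap2, htr_smul]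
    rw [hf (x + y), hf x, hf y,
      Finset.sum_congr rfl (fun i _ => expand i),
      Finset.sum_add_distrib, Finset.sum_add_distrib, Finset.sum_add_distrib, reindex]
    linear_combination hsum2
  have hfsmul : ∀ (c : ZMod p) (x : F), f (algebraMap (ZMod p) F c * x) = c ^ 2 * f x := by
    intro c x
    rw [hf, hf, Finset.mul_sum]
    refine Finset.sum_congr rfl fun i _ => ?_
    have harg : a i * (algebraMap (ZMod p) F c * x) ^ (p ^ i.val + 1)
        = algebraMap (ZMod p) F (c ^ 2) * (a i * x ^ (p ^ i.val + 1)) := by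
      rw [mul_pow, pow_succ, hcast c i.val, map_pow]
      ring
    rw [harg, htr_smul]
  have hLsmul : ∀ (c : ZMod p) (x : F),
      L (algebraMap (ZMod p) F c * x) = algebraMap (ZMod p) F c * L x := by
    intro c x
    rw [hL, hL, Finset.mul_sum, Finset.mul_sum]
    rw [Finset.mul_sum]
    refine Finset.sum_congr rfl fun i _ => ?_
    rw [mul_pow, hcast c i.val]
    ring
  have hsymm : ∀ x y : F,
      Algebra.trace (ZMod p) F (L x * y) = Algebra.trace (ZMod p) F (L y * x) := by
    intro x y
    have h1 := hfadd x y
    have h2 := hfadd y x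
    rw [add_comm y x] at h2
    have h3 : 2 * Algebra.trace (ZMod p) F (L x * y) = 2 * Algebra.trace (ZMod p) F (L y * x) := by
      linear_combination h2 - h1
    exact mul_left_cancel₀ h2p h3
  have hTrL : ∀ z : F, Algebra.trace (ZMod p) F (L xα * z)
      = -(2⁻¹ : ZMod p) * Algebra.trace (ZMod p) F (α * z) := by
    intro z
    rw [hxα]
    have harg : -(α / 2) * z = algebraMap (ZMod p) F (-(2⁻¹ : ZMod p)) * (α * z) := by
      rw [map_neg, map_inv₀, hmap2]
      field_simp
    rw [harg, htr_smul]
  have hTrLxx : Algebra.trace (ZMod p) F (L xα * xα) = f xα := by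
    have h1 := hfadd xα xα
    have h2 : f (xα + xα) = 4 * f xα := by
      have hxx : xα + xα = algebraMap (ZMod p) F 2 * xα := by rw [hmap2]; ring
      rw [hxx, hfsmul]
      norm_num
    have h3 : 2 * Algebra.trace (ZMod p) F (L xα * xα) = 2 * f xα := by
      linear_combination h2 - h1
    exact mul_left_cancel₀ h2p h3
  have hTrαxα : Algebra.trace (ZMod p) F (α * xα) = -(2 * f xα) := by
    have h1 := hTrL xα
    rw [hTrLxx] at h1
    have h22 : (2 : ZMod p) * 2⁻¹ = 1 := mul_inv_cancel₀ h2p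
    linear_combination (2 : ZMod p) * h1 - Algebra.trace (ZMod p) F (α * xα) * h22
  have hα0 : α ≠ 0 := by
    intro h
    rw [h, zero_mul, map_zero] at hTrαxα
    have : f xα = 0 := by
      have h4 : (2 : ZMod p) * f xα = 0 := by linear_combination hTrαxα
      rcases mul_eq_zero.mp h4 with h5 | h5
      · exact absurd h5 h2p
      · exact h5
    exact hfxα this
  have h4c : (4 : ZMod p) * f xα ≠ 0 := by
    have h4 : (4 : ZMod p) = 2 * 2 := by norm_num
    rw [h4, mul_assoc]
    exact mul_ne_zero h2p (mul_ne_zero h2p hfxα)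
  -- invariance of g under translations along xα
  have hginv : ∀ (x : F) (v : ZMod p),
      f (x + algebraMap (ZMod p) F v * xα)
        - (Algebra.trace (ZMod p) F (α * (x + algebraMap (ZMod p) F v * xα))) ^ 2 / (4 * f xα)
      = f x - (Algebra.trace (ZMod p) F (α * x)) ^ 2 / (4 * f xα) := by
    intro x v
    have e1 : f (x + algebraMap (ZMod p) F v * xα)
        = f x + v ^ 2 * f xα
          + 2 * (v * (-(2⁻¹ : ZMod p) * Algebra.trace (ZMod p) F (α * x))) := by
      rw [hfadd x (algebraMap (ZMod p) F v * xα), hfsmul v xα,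
        hsymm x (algebraMap (ZMod p) F v * xα), hLsmul v xα, mul_assoc, htr_smul, hTrL]
    have e2 : Algebra.trace (ZMod p) F (α * (x + algebraMap (ZMod p) F v * xα))
        = Algebra.trace (ZMod p) F (α * x) + v * -(2 * f xα) := by
      rw [mul_add, map_add]
      congr 1
      rw [show α * (algebraMap (ZMod p) F v * xα) = algebraMap (ZMod p) F v * (α * xα) by ring,
        htr_smul, hTrαxα]
    rw [e1, e2]
    field_simp
    have h44 : (4 : ZMod p)⁻¹ * 4 = 1 := inv_mul_cancel₀ (left_ne_zero_of_mul h4c)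
    linear_combination (f xα * v * Algebra.trace (ZMod p) F (α * x) - f xα ^ 2 * v ^ 2) * h44
  have hTrshift : ∀ (x : F) (v : ZMod p),
      Algebra.trace (ZMod p) F (α * (x + algebraMap (ZMod p) F v * xα))
      = Algebra.trace (ZMod p) F (α * x) + v * -(2 * f xα) := by
    intro x v
    rw [mul_add, map_add]
    congr 1
    rw [show α * (algebraMap (ZMod p) F v * xα) = algebraMap (ZMod p) F v * (α * xα) by ring,
      htr_smul, hTrαxα]
  have h2c : (2 : ZMod p) * f xα ≠ 0 := mul_ne_zero h2p hfxα
  set φ : F → ZMod p := fun x => Algebra.trace (ZMod p) F (α * x) / (2 * f xα) with hφdef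
  have hΦ0 : ∀ x : F,
      Algebra.trace (ZMod p) F (α * (x + algebraMap (ZMod p) F (φ x) * xα)) = 0 := by
    intro x
    rw [hTrshift]
    have hh : φ x * -(2 * f xα) = -(Algebra.trace (ZMod p) F (α * x)) := by
      rw [hφdef]
      field_simp
    rw [hh]
    ring
  set M : ℕ := Fintype.card {z : F // Algebra.trace (ZMod p) F (α * z) = 0 ∧ f z = t} with hMdef
  have hNM : {x : F | f x - (Algebra.trace (ZMod p) F (α * x)) ^ 2 / (4 * f xα) = t}.ncard
      = M * p := by
    rw [← Nat.card_coe_set_eq, Nat.card_eq_fintype_card]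
    have e : {x : F | f x - (Algebra.trace (ZMod p) F (α * x)) ^ 2 / (4 * f xα) = t}
        ≃ {z : F // Algebra.trace (ZMod p) F (α * z) = 0 ∧ f z = t} × ZMod p := by
      refine ⟨fun x => (⟨x.1 + algebraMap (ZMod p) F (φ x.1) * xα, ?_, ?_⟩, -(φ x.1)),
        fun zv => ⟨zv.1.1 + algebraMap (ZMod p) F zv.2 * xα, ?_⟩, ?_, ?_⟩
      · exact hΦ0 x.1
      · -- f value is t
        have hg := hginv x.1 (φ x.1)
        have hx := x.2
        rw [Set.mem_setOf_eq] at hx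
        have h0 := hΦ0 x.1
        have hz : f (x.1 + algebraMap (ZMod p) F (φ x.1) * xα)
            - (Algebra.trace (ZMod p) F (α * (x.1 + algebraMap (ZMod p) F (φ x.1) * xα))) ^ 2
              / (4 * f xα)
            = f (x.1 + algebraMap (ZMod p) F (φ x.1) * xα) := by
          rw [h0, zero_pow two_ne_zero, zero_div, sub_zero]
        rw [← hz, hg, hx]
      · -- invFun lands in the set
        obtain ⟨⟨z, hz1, hz2⟩, v⟩ := zv
        rw [Set.mem_setOf_eq, hginv z v, hz1, zero_pow two_ne_zero, zero_div, sub_zero]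
        exact hz2
      · -- left inverse
        rintro ⟨x, hx⟩
        apply Subtype.ext
        simp only [map_neg]
        ring
      · -- right inverse
        rintro ⟨⟨z, hz1, hz2⟩, v⟩
        have hTrx : Algebra.trace (ZMod p) F (α * (z + algebraMap (ZMod p) F v * xα))
            = v * -(2 * f xα) := by
          rw [hTrshift, hz1, zero_add]
        have hφx : φ (z + algebraMap (ZMod p) F v * xα) = -v := by
          rw [hφdef]
          simp only
          rw [hTrx, div_eq_iff h2c]
          ring
        simp only [Prod.mk.injEq]
        constructor
        · apply Subtype.ext
          simp only [hφx, map_neg]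
          ring
        · rw [hφx, neg_neg]
    rw [Fintype.card_congr e, Fintype.card_prod, ZMod.card]
  -- the Weil sums S y
  set S : ZMod p → ℂ := fun y => ∑ z : F, eP p (y * f z) with hSdef
  have hS1 : S 1 = ε * (p : ℂ) ^ m * GP p ^ (-(r : ℤ)) := by
    rw [hSdef]
    simp only [one_mul]
    exact hsign
  have hSsq : ∀ (c : ZMod p), c ≠ 0 → ∀ y : ZMod p, S (c ^ 2 * y) = S y := by
    intro c hc y
    rw [hSdef]
    simp only
    have hcF : algebraMap (ZMod p) F c ≠ 0 := fun h =>
      hc ((algebraMap (ZMod p) F).injective (by rw [h, map_zero]))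
    refine Fintype.sum_equiv (Equiv.mulLeft₀ (algebraMap (ZMod p) F c) hcF) _ _ (fun z => ?_)
    have he : (Equiv.mulLeft₀ _ hcF) z = algebraMap (ZMod p) F c * z := rfl
    rw [he, hfsmul]
    congr 1
    ring
  have hrc2 : ringChar (ZMod p) ≠ 2 := Aux.ringChar_ne_two p hp2
  obtain ⟨y₀, hy₀⟩ := FiniteField.exists_nonsquare hrc2
  have hy₀0 : y₀ ≠ 0 := fun h => hy₀ (h ▸ ⟨0, by ring⟩)
  have hχy₀ : quadraticChar (ZMod p) y₀ = -1 := quadraticChar_neg_one_iff_not_isSquare.mpr hy₀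
  set C : ℂ := (S 1 + S y₀) / 2 with hCdef
  set E : ℂ := (S 1 - S y₀) / 2 with hEdef
  have hSy : ∀ y : ZMod p, y ≠ 0 → S y = C + chiP p y * E := by
    intro y hy
    rcases (quadraticChar_isQuadratic (ZMod p)) y with h | h | h
    · exact absurd (quadraticChar_eq_zero_iff.mp h) hy
    · obtain ⟨c, hc⟩ := (quadraticChar_one_iff_isSquare hy).mp h
      have hc0 : c ≠ 0 := by rintro rfl; rw [mul_zero] at hc; exact hy hc
      have hy' : y = c ^ 2 * 1 := by rw [hc]; ring
      rw [show chiP p y = 1 from by rw [chiP, h]; norm_num]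
      rw [hy', hSsq c hc0 1]
      rw [hCdef, hEdef]
      ring
    · have hyinv : quadraticChar (ZMod p) y₀⁻¹ = -1 := by
        have hmul : quadraticChar (ZMod p) (y₀ * y₀⁻¹) = 1 := by
          rw [mul_inv_cancel₀ hy₀0, map_one]
        rw [map_mul, hχy₀] at hmul
        linarith
      have hyy : y * y₀⁻¹ ≠ 0 := mul_ne_zero hy (inv_ne_zero hy₀0)
      have hsq : IsSquare (y * y₀⁻¹) := by
        apply (quadraticChar_one_iff_isSquare hyy).mp
        rw [map_mul, h, hyinv]
        norm_num
      obtain ⟨c, hc⟩ := hsq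
      have hc0 : c ≠ 0 := by rintro rfl; rw [mul_zero] at hc; exact hyy hc
      have hy' : y = c ^ 2 * y₀ := by
        field_simp at hc
        rw [sq]
        linear_combination hc
      rw [show chiP p y = -1 from by rw [chiP, h]; norm_num]
      rw [hy', hSsq c hc0 y₀]
      rw [hCdef, hEdef]
      ring
  -- rationality setup
  set QQ : Subfield ℂ := (Rat.castHom ℂ).fieldRange with hQQdef
  have hQmem : ∀ q : ℚ, (q : ℂ) ∈ QQ := fun q => ⟨q, rfl⟩
  have hQnat : ∀ n : ℕ, (n : ℂ) ∈ QQ := fun n => ⟨n, map_natCast _ n⟩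
  have hQchi : ∀ c : ZMod p, chiP p c ∈ QQ := fun c =>
    ⟨((quadraticChar (ZMod p) c : ℤ) : ℚ), by
      show ((((quadraticChar (ZMod p) c : ℤ) : ℚ)) : ℂ) = chiP p c
      rw [chiP]; push_cast; ring⟩
  have hGPne : GP p ≠ 0 := Aux.GP_ne_zero p hp2
  have hQGP2 : GP p ^ 2 ∈ QQ := by
    rw [Aux.GP_sq p hp2]
    exact mul_mem (hQchi _) (hQnat p)
  have hGPQ : GP p ∉ QQ := by
    rintro ⟨q, hq⟩
    exact Aux.GP_not_rat p hp2 q hq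
  have hεQ : ε ∈ QQ := by
    rcases hε with h | h <;> rw [h]
    · exact one_mem _
    · exact neg_mem (one_mem _)
  have hp1 : (p : ℂ) - 1 ≠ 0 := by
    intro h
    have h1 : (p : ℂ) = ((1 : ℕ) : ℂ) := by push_cast; linear_combination h
    exact hp.ne_one (Nat.cast_injective h1)
  -- sum of S over all y, and over nonzero y
  have herase : ∀ g : ZMod p → ℂ,
      ∑ y ∈ Finset.univ.erase (0 : ZMod p), g y = (∑ y : ZMod p, g y) - g 0 := by
    intro g
    have := Finset.add_sum_erase Finset.univ g (Finset.mem_univ (0 : ZMod p))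
    linear_combination this
  have hcarderase : (((Finset.univ.erase (0 : ZMod p)).card : ℕ) : ℂ) = (p : ℂ) - 1 := by
    rw [Finset.card_erase_of_mem (Finset.mem_univ _), Finset.card_univ, ZMod.card,
      Nat.cast_sub hp.one_lt.le]
    norm_num
  have hS0 : S 0 = (p : ℂ) ^ m := by
    rw [hSdef]
    simp only [zero_mul, Aux.eP_zero, Finset.sum_const, Finset.card_univ, hcard,
      nsmul_eq_mul, mul_one]
    push_cast
    ring
  have hStot : ∑ y : ZMod p, S y
      = (p : ℂ) * ((Finset.univ.filter (fun z : F => f z = 0)).card : ℂ) := by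
    rw [hSdef]
    simp only
    rw [Finset.sum_comm]
    rw [Finset.sum_congr rfl (fun z _ => Aux.sum_eP_mul p (f z))]
    rw [Finset.sum_ite, Finset.sum_const, Finset.sum_const_zero, add_zero, nsmul_eq_mul]
    ring
  have hchisum0 : ∑ y ∈ Finset.univ.erase (0 : ZMod p), chiP p y = 0 := by
    rw [herase, Aux.chiP_sum p hp2, Aux.chiP_zero, sub_zero]
  have hCval : ((p : ℂ) - 1) * C = ∑ y ∈ Finset.univ.erase (0 : ZMod p), S y := by
    rw [Finset.sum_congr rfl (fun y hy => hSy y (Finset.mem_erase.mp hy).1),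
      Finset.sum_add_distrib, Finset.sum_const, ← Finset.sum_mul, hchisum0, zero_mul,
      add_zero, nsmul_eq_mul, hcarderase]
  have hCQ : C ∈ QQ := by
    have h1 : ((p : ℂ) - 1) * C
        = (p : ℂ) * ((Finset.univ.filter (fun z : F => f z = 0)).card : ℂ) - (p : ℂ) ^ m := by
      rw [hCval, herase S, hStot, hS0]
    have h2 : C = ((p : ℂ) * ((Finset.univ.filter (fun z : F => f z = 0)).card : ℂ)
        - (p : ℂ) ^ m) / ((p : ℂ) - 1) := by
      rw [eq_div_iff hp1]
      linear_combination h1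
    rw [h2]
    exact div_mem (sub_mem (mul_mem (hQnat p) (hQnat _)) (pow_mem (hQnat p) m))
      (sub_mem (hQnat p) (one_mem _))
  set K : ℂ := ∑ z : F, chiP p (f z) with hKdef
  have hKQ : K ∈ QQ := sum_mem (fun z _ => hQchi (f z))
  have hEval : ((p : ℂ) - 1) * E = GP p * K := by
    have lhs : ∑ y ∈ Finset.univ.erase (0 : ZMod p), chiP p y * S y = ((p : ℂ) - 1) * E := by
      have step : ∀ y ∈ Finset.univ.erase (0 : ZMod p), chiP p y * S y = chiP p y * C + E := by
        intro y hy
        rw [hSy y (Finset.mem_erase.mp hy).1]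
        have hsq := Aux.chiP_sq p (Finset.mem_erase.mp hy).1
        linear_combination E * hsq
      rw [Finset.sum_congr rfl step, Finset.sum_add_distrib, ← Finset.sum_mul, hchisum0,
        zero_mul, zero_add, Finset.sum_const, nsmul_eq_mul, hcarderase]
    have rhs : ∑ y ∈ Finset.univ.erase (0 : ZMod p), chiP p y * S y = GP p * K := by
      rw [herase (fun y => chiP p y * S y)]
      simp only [Aux.chiP_zero, zero_mul, sub_zero]
      calc ∑ y : ZMod p, chiP p y * S y
          = ∑ y : ZMod p, ∑ z : F, chiP p y * eP p (y * f z) := by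
            simp only [hSdef]
            exact Finset.sum_congr rfl (fun y _ => by rw [Finset.mul_sum])
        _ = ∑ z : F, ∑ y : ZMod p, chiP p y * eP p (y * f z) := Finset.sum_comm
        _ = ∑ z : F, chiP p (f z) * GP p := Finset.sum_congr rfl (fun z _ => by
              rw [Finset.sum_congr rfl (fun y _ => by rw [mul_comm y (f z)])]
              exact Aux.gauss_shift' p hp2 (f z))
        _ = GP p * K := by
            rw [hKdef, ← Finset.sum_mul, mul_comm]
    rw [← lhs, rhs]
  have hS1CE : S 1 = C + E := by rw [hCdef, hEdef]; ring
  -- parity dichotomy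
  have heven : Even r → E = 0 ∧ C = S 1 := by
    rintro ⟨k, hk⟩
    have hGPr : GP p ^ (-(r : ℤ)) = ((GP p ^ 2) ^ k)⁻¹ := by
      have h1 : GP p ^ (r : ℕ) = (GP p ^ 2) ^ k := by
        rw [← pow_mul]
        congr 1
        omega
      rw [zpow_neg, zpow_natCast, h1]
    have hS1Q : S 1 ∈ QQ := by
      rw [hS1, hGPr]
      exact mul_mem (mul_mem hεQ (pow_mem (hQnat p) m)) (inv_mem (pow_mem hQGP2 k))
    have hEQ : E ∈ QQ := by
      have hE' : E = S 1 - C := by linear_combination hS1CE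
      rw [hE']
      exact sub_mem hS1Q hCQ
    have hE0 : E = 0 := by
      by_contra hE0
      have hK0 : K ≠ 0 := by
        intro h
        rw [h, mul_zero] at hEval
        rcases mul_eq_zero.mp hEval with h' | h'
        · exact hp1 h'
        · exact hE0 h'
      apply hGPQ
      have hGP' : GP p = ((p : ℂ) - 1) * E / K := by
        rw [eq_div_iff hK0]
        linear_combination -hEval
      rw [hGP']
      exact div_mem (mul_mem (sub_mem (hQnat p) (one_mem _)) hEQ) hKQ
    exact ⟨hE0, by rw [hS1CE, hE0, add_zero]⟩
  have hodd : Odd r → C = 0 ∧ E = S 1 := by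
    rintro ⟨k, hk⟩
    have hGPr : GP p ^ (-(r : ℤ)) = ((GP p ^ 2) ^ (k + 1))⁻¹ * GP p := by
      have h1 : GP p ^ ((2 * (k + 1) : ℕ)) = (GP p ^ 2) ^ (k + 1) := by
        rw [← pow_mul]
      have h2 : (-(r : ℤ)) = -(((2 * (k + 1) : ℕ)) : ℤ) + 1 := by
        rw [hk]; push_cast; ring
      rw [h2, zpow_add₀ hGPne, zpow_one, zpow_neg, zpow_natCast, h1]
    set ρ : ℂ := ε * (p : ℂ) ^ m * ((GP p ^ 2) ^ (k + 1))⁻¹ with hρdef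
    have hρQ : ρ ∈ QQ :=
      mul_mem (mul_mem hεQ (pow_mem (hQnat p) m)) (inv_mem (pow_mem hQGP2 (k + 1)))
    have hρ : S 1 = ρ * GP p := by
      rw [hS1, hGPr, hρdef]
      ring
    have hEK : E = GP p * K / ((p : ℂ) - 1) := by
      rw [eq_div_iff hp1]
      linear_combination hEval
    have hCGP : C = GP p * (ρ - K / ((p : ℂ) - 1)) := by
      have hC' : C = S 1 - E := by linear_combination hS1CE
      rw [hC', hρ, hEK]
      ring
    have hC0 : C = 0 := by
      by_cases hz : ρ - K / ((p : ℂ) - 1) = 0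
      · rw [hCGP, hz, mul_zero]
      · exfalso
        apply hGPQ
        have hGP' : GP p = C / (ρ - K / ((p : ℂ) - 1)) := by
          rw [eq_div_iff hz, hCGP]
        rw [hGP']
        exact div_mem hCQ (sub_mem hρQ (div_mem hKQ (sub_mem (hQnat p) (one_mem _))))
    exact ⟨hC0, by rw [hS1CE, hC0, zero_add]⟩
  -- the double character sum T
  set T : ZMod p → ZMod p → ℂ :=
    fun y u => ∑ z : F, eP p (y * f z + u * Algebra.trace (ZMod p) F (α * z)) with hTdef
  have hstepA : (p : ℂ) ^ 2 * (M : ℂ)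
      = ∑ z : F, (∑ y : ZMod p, eP p (y * (f z - t)))
          * (∑ u : ZMod p, eP p (u * Algebra.trace (ZMod p) F (α * z))) := by
    have hAz : ∀ z : F, (∑ y : ZMod p, eP p (y * (f z - t)))
        * (∑ u : ZMod p, eP p (u * Algebra.trace (ZMod p) F (α * z)))
        = if (Algebra.trace (ZMod p) F (α * z) = 0 ∧ f z = t) then (p : ℂ) ^ 2 else 0 := by
      intro z
      rw [Aux.sum_eP_mul, Aux.sum_eP_mul]
      by_cases h1 : f z - t = 0
      · by_cases h2 : Algebra.trace (ZMod p) F (α * z) = 0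
        · rw [if_pos h1, if_pos h2, if_pos ⟨h2, sub_eq_zero.mp h1⟩]; ring
        · rw [if_pos h1, if_neg h2, if_neg (fun hc => h2 hc.1), mul_zero]
      · rw [if_neg h1, zero_mul, if_neg (fun hc => h1 (sub_eq_zero.mpr hc.2))]
    rw [Finset.sum_congr rfl (fun z _ => hAz z), Finset.sum_ite, Finset.sum_const,
      Finset.sum_const_zero, add_zero, nsmul_eq_mul]
    have hMc : (M : ℂ) = ((Finset.univ.filter
        (fun z : F => Algebra.trace (ZMod p) F (α * z) = 0 ∧ f z = t)).card : ℂ) := by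
      rw [hMdef, Fintype.card_subtype]
    rw [hMc]
    ring
  have hstepB : ∑ z : F, (∑ y : ZMod p, eP p (y * (f z - t)))
      * (∑ u : ZMod p, eP p (u * Algebra.trace (ZMod p) F (α * z)))
      = ∑ y : ZMod p, ∑ u : ZMod p, eP p (-(y * t)) * T y u := by
    calc ∑ z : F, (∑ y : ZMod p, eP p (y * (f z - t)))
          * (∑ u : ZMod p, eP p (u * Algebra.trace (ZMod p) F (α * z)))
        = ∑ z : F, ∑ y : ZMod p, ∑ u : ZMod p,
            eP p (y * (f z - t)) * eP p (u * Algebra.trace (ZMod p) F (α * z)) := by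
          exact Finset.sum_congr rfl (fun z _ => by rw [Finset.sum_mul_sum])
      _ = ∑ y : ZMod p, ∑ z : F, ∑ u : ZMod p,
            eP p (y * (f z - t)) * eP p (u * Algebra.trace (ZMod p) F (α * z)) :=
          Finset.sum_comm
      _ = ∑ y : ZMod p, ∑ u : ZMod p, ∑ z : F,
            eP p (y * (f z - t)) * eP p (u * Algebra.trace (ZMod p) F (α * z)) :=
          Finset.sum_congr rfl (fun y _ => Finset.sum_comm)
      _ = ∑ y : ZMod p, ∑ u : ZMod p, eP p (-(y * t)) * T y u := by
          refine Finset.sum_congr rfl (fun y _ => Finset.sum_congr rfl (fun u _ => ?_))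
          rw [hTdef]
          simp only
          rw [Finset.mul_sum]
          refine Finset.sum_congr rfl (fun z _ => ?_)
          rw [← Aux.eP_add, ← Aux.eP_add]
          congr 1
          ring
  have hT0 : ∀ u : ZMod p, T 0 u = if u = 0 then ((p : ℂ) ^ m) else 0 := by
    intro u
    simp only [hTdef, zero_mul, zero_add]
    by_cases hu : u = 0
    · rw [if_pos hu, hu]
      simp only [zero_mul, Aux.eP_zero, Finset.sum_const, Finset.card_univ, hcard,
        nsmul_eq_mul, mul_one]
      push_cast
      ring
    · rw [if_neg hu]
      obtain ⟨w, hw⟩ := Aux.trace_nd p F hα0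
      refine Aux.sum_shift_zero (fun z => eP p (u * Algebra.trace (ZMod p) F (α * z)))
        (fun a b => ?_) w (Aux.eP_ne_one p (mul_ne_zero hu hw))
      show eP p (u * Algebra.trace (ZMod p) F (α * (a + b)))
        = eP p (u * Algebra.trace (ZMod p) F (α * a))
          * eP p (u * Algebra.trace (ZMod p) F (α * b))
      rw [← Aux.eP_add]
      congr 1
      rw [mul_add α a b, map_add]
      ring
  have hTy : ∀ y u : ZMod p, y ≠ 0 → T y u = eP p (-(u ^ 2 * f xα / y)) * S y := by
    intro y u hy
    have hshift : ∀ z : F,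
        y * f (z + algebraMap (ZMod p) F (u / y) * xα)
          + u * Algebra.trace (ZMod p) F (α * (z + algebraMap (ZMod p) F (u / y) * xα))
        = -(u ^ 2 * f xα / y) + y * f z := by
      intro z
      rw [hfadd z (algebraMap (ZMod p) F (u / y) * xα), hfsmul (u / y) xα,
        hsymm z (algebraMap (ZMod p) F (u / y) * xα), hLsmul (u / y) xα, mul_assoc,
        htr_smul, hTrL, hTrshift]
      field_simp
      ring
    calc T y u
        = ∑ z : F, eP p (y * f (z + algebraMap (ZMod p) F (u / y) * xα)
            + u * Algebra.trace (ZMod p) F (α * (z + algebraMap (ZMod p) F (u / y) * xα))) := by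
          rw [hTdef]
          simp only
          exact (Fintype.sum_equiv (Equiv.addRight (algebraMap (ZMod p) F (u / y) * xα))
            _ _ (fun z => rfl)).symm
      _ = ∑ z : F, eP p (-(u ^ 2 * f xα / y)) * eP p (y * f z) := by
          refine Finset.sum_congr rfl (fun z _ => ?_)
          rw [hshift z, Aux.eP_add]
      _ = eP p (-(u ^ 2 * f xα / y)) * S y := by
          rw [← Finset.mul_sum, hSdef]
  have hsum_sq : ∀ y : ZMod p, y ≠ 0 →
      ∑ u : ZMod p, eP p (-(u ^ 2 * f xα / y))
        = chiP p (-(f xα)) * chiP p y * GP p := by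
    intro y hy
    have hd : -(f xα) / y ≠ 0 := div_ne_zero (neg_ne_zero.mpr hfxα) hy
    calc ∑ u : ZMod p, eP p (-(u ^ 2 * f xα / y))
        = ∑ u : ZMod p, eP p ((-(f xα) / y) * u ^ 2) := by
          refine Finset.sum_congr rfl (fun u _ => ?_)
          congr 1
          ring
      _ = chiP p (-(f xα) / y) * GP p := Aux.sum_squares p hp2 hd
      _ = chiP p (-(f xα)) * chiP p y * GP p := by
          rw [div_eq_mul_inv, Aux.chiP_mul, Aux.chiP_inv]
  have hA : ∑ y : ZMod p, chiP p y * eP p (-(y * t)) = chiP p (-t) * GP p := by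
    calc ∑ y : ZMod p, chiP p y * eP p (-(y * t))
        = ∑ y : ZMod p, chiP p y * eP p ((-t) * y) := by
          refine Finset.sum_congr rfl (fun y _ => ?_)
          congr 2
          ring
      _ = chiP p (-t) * GP p := Aux.gauss_shift' p hp2 (-t)
  have hB : ∑ y ∈ Finset.univ.erase (0 : ZMod p), eP p (-(y * t))
      = (if t = 0 then (p : ℂ) else 0) - 1 := by
    rw [herase (fun y => eP p (-(y * t)))]
    have h1 : ∑ y : ZMod p, eP p (-(y * t)) = ∑ y : ZMod p, eP p (y * (-t)) := by
      refine Finset.sum_congr rfl (fun y _ => ?_)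
      congr 1
      ring
    rw [h1, Aux.sum_eP_mul]
    simp only [neg_eq_zero, zero_mul, neg_zero, Aux.eP_zero]
  have hMain : (p : ℂ) ^ 2 * (M : ℂ)
      = (p : ℂ) ^ m + chiP p (-(f xα)) * GP p
          * (C * (chiP p (-t) * GP p) + E * ((if t = 0 then (p : ℂ) else 0) - 1)) := by
    rw [hstepA, hstepB]
    rw [← Finset.add_sum_erase Finset.univ
      (fun y => ∑ u : ZMod p, eP p (-(y * t)) * T y u) (Finset.mem_univ (0 : ZMod p))]
    have hzero : ∑ u : ZMod p, eP p (-((0 : ZMod p) * t)) * T 0 u = (p : ℂ) ^ m := by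
      calc ∑ u : ZMod p, eP p (-((0 : ZMod p) * t)) * T 0 u
          = ∑ u : ZMod p, (if u = 0 then ((p : ℂ) ^ m) else 0) := by
            refine Finset.sum_congr rfl (fun u _ => ?_)
            rw [hT0 u, zero_mul, neg_zero, Aux.eP_zero, one_mul]
        _ = (p : ℂ) ^ m := by
            rw [Finset.sum_ite_eq' Finset.univ (0 : ZMod p) (fun _ => (p : ℂ) ^ m)]
            exact if_pos (Finset.mem_univ _)
    have hrest : ∑ y ∈ Finset.univ.erase (0 : ZMod p),
        ∑ u : ZMod p, eP p (-(y * t)) * T y u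
        = chiP p (-(f xα)) * GP p
          * (C * (chiP p (-t) * GP p) + E * ((if t = 0 then (p : ℂ) else 0) - 1)) := by
      have hy' : ∀ y ∈ Finset.univ.erase (0 : ZMod p),
          ∑ u : ZMod p, eP p (-(y * t)) * T y u
          = chiP p (-(f xα)) * GP p * (chiP p y * eP p (-(y * t)) * S y) := by
        intro y hy
        have hy0 := (Finset.mem_erase.mp hy).1
        calc ∑ u : ZMod p, eP p (-(y * t)) * T y u
            = ∑ u : ZMod p, (eP p (-(y * t)) * S y) * eP p (-(u ^ 2 * f xα / y)) := by
              refine Finset.sum_congr rfl (fun u _ => ?_)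
              rw [hTy y u hy0]
              ring
          _ = (eP p (-(y * t)) * S y) * (chiP p (-(f xα)) * chiP p y * GP p) := by
              rw [← Finset.mul_sum, hsum_sq y hy0]
          _ = chiP p (-(f xα)) * GP p * (chiP p y * eP p (-(y * t)) * S y) := by ring
      rw [Finset.sum_congr rfl hy', ← Finset.mul_sum]
      congr 1
      have hy'' : ∀ y ∈ Finset.univ.erase (0 : ZMod p),
          chiP p y * eP p (-(y * t)) * S y
          = (chiP p y * eP p (-(y * t))) * C + eP p (-(y * t)) * E := by
        intro y hy
        have hy0 := (Finset.mem_erase.mp hy).1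
        rw [hSy y hy0]
        have hsq := Aux.chiP_sq p hy0
        linear_combination (eP p (-(y * t)) * E) * hsq
      rw [Finset.sum_congr rfl hy'', Finset.sum_add_distrib, ← Finset.sum_mul, ← Finset.sum_mul]
      have hAe : ∑ y ∈ Finset.univ.erase (0 : ZMod p), chiP p y * eP p (-(y * t))
          = chiP p (-t) * GP p := by
        rw [herase (fun y => chiP p y * eP p (-(y * t))), Aux.chiP_zero, zero_mul, sub_zero, hA]
      rw [hAe, hB]
      ring
    rw [hzero, hrest]
  -- zpow bookkeeping
  have hzp2 : GP p ^ 2 * GP p ^ (-(r : ℤ)) = GP p ^ (-((r : ℤ) - 2)) := by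
    rw [← zpow_natCast (GP p) 2, ← zpow_add₀ hGPne]
    congr 1
    push_cast
    ring
  have hzp1 : GP p * GP p ^ (-(r : ℤ)) = GP p ^ (-((r : ℤ) - 1)) := by
    rw [show GP p * GP p ^ (-(r : ℤ)) = GP p ^ (1 : ℤ) * GP p ^ (-(r : ℤ)) by rw [zpow_one],
      ← zpow_add₀ hGPne]
    congr 1
    ring
  have hpm1 : (p : ℂ) ^ m = (p : ℂ) * (p : ℂ) ^ (m - 1) := by
    conv_lhs => rw [show m = (m - 1) + 1 from (Nat.succ_pred_eq_of_pos (NeZero.pos m)).symm]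
    rw [pow_succ]
    ring
  have hNc : (({x : F | f x - (Algebra.trace (ZMod p) F (α * x)) ^ 2 / (4 * f xα) = t}.ncard : ℕ) : ℂ)
      = (M : ℂ) * (p : ℂ) := by
    rw [hNM]
    push_cast
    ring
  refine ⟨?_, ?_, ?_, ?_⟩
  · intro he ht
    obtain ⟨hE0, hCS1⟩ := heven he
    rw [hNc]
    apply mul_left_cancel₀ hpn0
    calc (p : ℂ) * ((M : ℂ) * (p : ℂ)) = (p : ℂ) ^ 2 * (M : ℂ) := by ring
      _ = _ := hMain
      _ = (p : ℂ) * ((p : ℂ) ^ (m - 1)) := by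
          rw [ht, hE0, neg_zero, Aux.chiP_zero, if_pos rfl, hpm1]
          ring
  · intro he ht
    obtain ⟨hE0, hCS1⟩ := heven he
    rw [hNc]
    apply mul_left_cancel₀ hpn0
    calc (p : ℂ) * ((M : ℂ) * (p : ℂ)) = (p : ℂ) ^ 2 * (M : ℂ) := by ring
      _ = _ := hMain
      _ = (p : ℂ) * ((p : ℂ) ^ (m - 1)
            + ε * chiP p (-t) * chiP p (-(f xα)) * (p : ℂ) ^ (m - 1)
              * GP p ^ (-((r : ℤ) - 2))) := by
          rw [hE0, hCS1, hS1, if_neg ht, ← hzp2, hpm1]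
          ring
  · intro ho ht
    obtain ⟨hC0, hES1⟩ := hodd ho
    rw [hNc]
    apply mul_left_cancel₀ hpn0
    calc (p : ℂ) * ((M : ℂ) * (p : ℂ)) = (p : ℂ) ^ 2 * (M : ℂ) := by ring
      _ = _ := hMain
      _ = (p : ℂ) * ((p : ℂ) ^ (m - 1)
            + ε * chiP p (-(f xα)) * ((p : ℂ) - 1) * (p : ℂ) ^ (m - 1)
              * GP p ^ (-((r : ℤ) - 1))) := by
          rw [hC0, hES1, hS1, if_pos ht, ← hzp1, hpm1]
          ring
  · intro ho ht
    obtain ⟨hC0, hES1⟩ := hodd ho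
    rw [hNc]
    apply mul_left_cancel₀ hpn0
    calc (p : ℂ) * ((M : ℂ) * (p : ℂ)) = (p : ℂ) ^ 2 * (M : ℂ) := by ring
      _ = _ := hMain
      _ = (p : ℂ) * ((p : ℂ) ^ (m - 1)
            - ε * chiP p (-(f xα)) * (p : ℂ) ^ (m - 1)
              * GP p ^ (-((r : ℤ) - 1))) := by
          rw [hC0, hES1, hS1, if_neg ht, ← hzp1, hpm1]
          ring
end
end
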